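/- arXiv:2509.00439 — 12 statements merged into one kernel-verified Lean document; each statement's English description precedes it below -/
import Mathlib

section
/- The MinMaxP mechanism, which on input agent locations x_1 ≤ ... ≤ x_n on the real line and prediction π outputs y = max(x_1, min(x_n, π)), is strategyproof: no agent i can strictly decrease |x_i − y| by reporting a different location. -/
open Finset

noncomputable def loF {n : ℕ} (x : Fin (n+1) → ℝ) : ℝ := univ.inf' univ_nonempty x
noncomputable def hiF {n : ℕ} (x : Fin (n+1) → ℝ) : ℝ := univ.sup' univ_nonempty x
noncomputable def midF {n : ℕ} (x : Fin (n+1) → ℝ) : ℝ := (loF x + hiF x) / 2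
noncomputable def rF {n : ℕ} (x : Fin (n+1) → ℝ) : ℝ := (hiF x - loF x) / 2
noncomputable def MC {n : ℕ} (x : Fin (n+1) → ℝ) (y : ℝ) : ℝ :=
  univ.sup' univ_nonempty (fun i => |x i - y|)
noncomputable def minMaxP {n : ℕ} (x : Fin (n+1) → ℝ) (π : ℝ) : ℝ :=
  max (loF x) (min (hiF x) π)

/-- MinMaxP is strategyproof on the real line: no agent `i` can strictly decrease
`|x i − y|` by reporting a different location. -/
theorem stmt0 {n : ℕ} (x : Fin (n+1) → ℝ) (π : ℝ) (i : Fin (n+1)) (xi' : ℝ) :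
    |x i - minMaxP x π| ≤ |x i - minMaxP (Function.update x i xi') π| := by
  set a := x i with ha
  set x' := Function.update x i xi' with hx'
  set L := loF x with hL
  set H := hiF x with hH
  set L' := loF x' with hL'
  set H' := hiF x' with hH'
  have hLa : L ≤ a := inf'_le _ (mem_univ i)
  have haH : a ≤ H := le_sup' _ (mem_univ i)
  have hLmem : ∃ k, x k = L := by
    obtain ⟨k, _, hk⟩ := exists_mem_eq_inf' (univ_nonempty) x
    exact ⟨k, hk.symm⟩
  have hHmem : ∃ k, x k = H := by
    obtain ⟨k, _, hk⟩ := exists_mem_eq_sup' (univ_nonempty) x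
    exact ⟨k, hk.symm⟩
  have hL'le : ∀ j, j ≠ i → L' ≤ x j := by
    intro j hj
    have : L' ≤ x' j := inf'_le _ (mem_univ j)
    rwa [hx', Function.update_of_ne hj] at this
  have hH'ge : ∀ j, j ≠ i → x j ≤ H' := by
    intro j hj
    have : x' j ≤ H' := le_sup' _ (mem_univ j)
    rwa [hx', Function.update_of_ne hj] at this
  set y := minMaxP x π with hy
  set y' := minMaxP x' π with hy'
  have hyv : y = max L (min H π) := rfl
  have hy'v : y' = max L' (min H' π) := rfl
  rcases le_total π a with hpa | hap
  · -- π ≤ a : y = max L π ≤ a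
    have hmin : min H π = π := min_eq_right (hpa.trans haH)
    have hyle : y ≤ a := by rw [hyv, hmin]; exact max_le hLa hpa
    have hyge : π ≤ y := by rw [hyv, hmin]; exact le_max_right _ _
    rcases le_or_gt y' y with h | h
    · have : a - y ≤ a - y' := by linarith
      calc |a - y| = a - y := abs_of_nonneg (by linarith)
        _ ≤ a - y' := this
        _ ≤ |a - y'| := le_abs_self _
    · -- y' > y forces a = L, hence y = a
      have hmin' : min H' π ≤ y := le_trans (min_le_right _ _) hyge
      have hL'y : y < L' := by
        rcases max_cases L' (min H' π) with ⟨he, _⟩ | ⟨he, hlt⟩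
        · rw [hy'v] at h; linarith [he ▸ h]
        · rw [hy'v, he] at h; linarith
      obtain ⟨k, hk⟩ := hLmem
      have hki : k = i := by
        by_contra hki
        have := hL'le k hki
        have : L' ≤ L := hk ▸ this
        have hLy : L ≤ y := by rw [hyv]; exact le_max_left _ _
        linarith
      have haL : a = L := by rw [ha, ← hki, hk]
      have : y = a := le_antisymm hyle (by rw [haL, hyv]; exact le_max_left _ _)
      rw [this]; simp
  · -- a ≤ π : y ≥ a
    have hamin : a ≤ min H π := le_min haH hap
    have hyge : a ≤ y := by rw [hyv]; exact le_trans hamin (le_max_right _ _)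
    rcases le_or_gt y y' with h | h
    · have : y - a ≤ y' - a := by linarith
      calc |a - y| = y - a := abs_sub_comm a y ▸ abs_of_nonneg (by linarith)
        _ ≤ y' - a := this
        _ ≤ |a - y'| := by rw [abs_sub_comm]; exact le_abs_self _
    · -- y' < y
      rcases max_cases L (min H π) with ⟨he, hge⟩ | ⟨he, hlt⟩
      · -- y = L ≤ a so y = a
        have : y = a := le_antisymm (by rw [hyv, he]; exact hLa) hyge
        rw [this]; simp
      · -- y = min H π > y' ≥ min H' π
        have hyeq : y = min H π := by rw [hyv, he]
        have hy'ge : min H' π ≤ y' := by rw [hy'v]; exact le_max_right _ _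
        have hmHp : min H' π < min H π := by rw [← hyeq]; linarith
        have hH'lt : H' < H := by
          rcases min_cases H' π with ⟨he2, _⟩ | ⟨he2, hlt2⟩
          · rw [he2] at hmHp; exact lt_of_lt_of_le hmHp (min_le_left _ _)
          · rw [he2] at hmHp; linarith [min_le_right H π]
        obtain ⟨k, hk⟩ := hHmem
        have hki : k = i := by
          by_contra hki
          have := hH'ge k hki
          rw [hk] at this; linarith
        have haH2 : a = H := by rw [ha, ← hki, hk]
        have : y = a := le_antisymm (by rw [hyeq, haH2]; exact min_le_left _ _) hyge
        rw [this]; simp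
end

section
/- For any profile x_1 ≤ ... ≤ x_n on the real line with optimal facility location o = (x_1 + x_n)/2 and optimal maximum cost r = (x_n − x_1)/2 > 0, and any prediction π with |π − o| ≤ η·r, the output y = max(x_1, min(x_n, π)) of MinMaxP satisfies max_i |x_i − y| ≤ (1 + min(1, η))·r. -/
open Finset

/-- MinMaxP achieves a (1 + min(1, η))-approximation of the optimal maximum cost
with respect to prediction error bound η. -/
theorem stmt1 {n : ℕ} (x : Fin (n+1) → ℝ) (π η : ℝ) (hη : 0 ≤ η)
    (hr : 0 < rF x) (herr : |π - midF x| ≤ η * rF x) :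
    ∀ i, |x i - minMaxP x π| ≤ (1 + min 1 η) * rF x := by
  intro i
  have hlo : loF x ≤ x i := Finset.inf'_le _ (Finset.mem_univ i)
  have hhi : x i ≤ hiF x := Finset.le_sup' _ (Finset.mem_univ i)
  have habs := abs_le.mp herr
  have hmid : midF x = (loF x + hiF x) / 2 := rfl
  have hrdef : rF x = (hiF x - loF x) / 2 := rfl
  rw [hmid, hrdef] at habs
  rw [hrdef] at hr ⊢
  have hrr : 0 ≤ η * ((hiF x - loF x) / 2) := by positivity
  have key : ∀ y : ℝ, loF x ≤ y → y ≤ hiF x →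
      (loF x + hiF x) / 2 - η * ((hiF x - loF x) / 2) ≤ y →
      y ≤ (loF x + hiF x) / 2 + η * ((hiF x - loF x) / 2) →
      |x i - y| ≤ (1 + min 1 η) * ((hiF x - loF x) / 2) := by
    intro y hy1 hy2 hy3 hy4
    rcases le_total η 1 with hcase | hcase
    · rw [min_eq_right hcase, abs_le]
      constructor <;> nlinarith
    · rw [min_eq_left hcase, abs_le]
      constructor <;> nlinarith
  have hlohi : loF x ≤ hiF x := by linarith
  rcases le_total π (loF x) with h2 | h2
  · have hy : minMaxP x π = loF x := by
      unfold minMaxP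
      rcases le_total (hiF x) π with h1 | h1
      · have : loF x = hiF x := le_antisymm hlohi (le_trans h1 h2)
        simp [min_eq_left h1, ← this]
      · rw [min_eq_right h1, max_eq_left h2]
    rw [hy]
    exact key _ le_rfl hlohi (by linarith [habs.1]) (by linarith)
  · rcases le_total (hiF x) π with h1 | h1
    · have hy : minMaxP x π = hiF x := by
        unfold minMaxP; rw [min_eq_left h1, max_eq_right hlohi]
      rw [hy]
      exact key _ hlohi le_rfl (by linarith) (by linarith [habs.2])
    · have hy : minMaxP x π = π := by
        unfold minMaxP; rw [min_eq_right h1, max_eq_right h2]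
      rw [hy]
      exact key _ h2 h1 (by linarith [habs.1]) (by linarith [habs.2])
end

section
/- Any deterministic strategyproof unanimous mechanism on the real line is uncompromising: if f(x) = y and x_i > y, then f(x_i', x_{−i}) = y for all x_i' ≥ y; and if x_i < y, then f(x_i', x_{−i}) = y for all x_i' ≤ y. -/
namespace UncompAux
set_option linter.unusedSectionVars false
set_option maxHeartbeats 1000000

variable {ι : Type} [DecidableEq ι] [Fintype ι]

def SP (f : (ι → ℝ) → ℝ) : Prop :=
  ∀ (x : ι → ℝ) (i : ι) (t : ℝ), |x i - f x| ≤ |x i - f (Function.update x i t)|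

def UN (f : (ι → ℝ) → ℝ) : Prop := ∀ c : ℝ, f (fun _ => c) = c


lemma sp_back {f : (ι → ℝ) → ℝ} (hSP : SP f) (x : ι → ℝ) (i : ι) (t : ℝ) :
    |t - f (Function.update x i t)| ≤ |t - f x| := by
  have h := hSP (Function.update x i t) i (x i)
  simpa [Function.update_idem, Function.update_eq_self] using h

lemma move_to_fac {f : (ι → ℝ) → ℝ} (hSP : SP f) (x : ι → ℝ) (i : ι) :
    f (Function.update x i (f x)) = f x := by
  have h := sp_back hSP x i (f x)
  simp only [sub_self, abs_zero] at h
  have h0 : |f x - f (Function.update x i (f x))| = 0 :=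
    le_antisymm h (abs_nonneg _)
  have := abs_eq_zero.mp h0
  linarith [sub_eq_zero.mp this]

lemma ride {f : (ι → ℝ) → ℝ} (hSP : SP f) (x : ι → ℝ) (k : ι) (v : ℝ)
    (h1 : x k < v) (h2 : v ≤ f x) : f (Function.update x k v) = f x := by
  have ha := hSP x k v
  have hb := sp_back hSP x k v
  set b := f (Function.update x k v) with hbdef
  have e1 : |v - f x| = f x - v := by rw [abs_sub_comm, abs_of_nonneg (by linarith)]
  rw [e1] at hb
  have e2 : |x k - f x| = f x - x k := by rw [abs_sub_comm, abs_of_nonneg (by linarith)]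
  rw [e2] at ha
  have hb2 : 2*v - f x ≤ b := by
    rcases abs_cases (v - b) with ⟨he, _⟩ | ⟨he, _⟩ <;> rw [he] at hb <;> linarith
  rcases abs_cases (x k - b) with ⟨he, _⟩ | ⟨he, _⟩ <;> rw [he] at ha <;>
    rcases abs_cases (v - b) with ⟨he2, _⟩ | ⟨he2, _⟩ <;> rw [he2] at hb <;> linarith

lemma exists_le {f : (ι → ℝ) → ℝ} (hSP : SP f) (hUN : UN f) [Nonempty ι] (x : ι → ℝ) :
    ∃ j, x j ≤ f x := by
  by_contra hcon
  push_neg at hcon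
  set y := f x with hy
  set μ := Finset.univ.inf' Finset.univ_nonempty x with hμ
  have hyμ : y < μ := by
    rw [hμ, Finset.lt_inf'_iff]; intro j _; exact hcon j
  have key : ∀ S : Finset ι, f (fun k => if k ∈ S then μ else x k) = y := by
    intro S
    induction S using Finset.induction_on with
    | empty => simp [← hy]
    | @insert j S hjS ih =>
      set P : ι → ℝ := fun k => if k ∈ S then μ else x k with hP
      have hP' : (fun k => if k ∈ insert j S then μ else x k) = Function.update P j μ := by
        funext k
        by_cases hk : k = j
        · subst hk; simp
        · simp [Function.update_of_ne hk, hP, Finset.mem_insert, hk]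
      rw [hP']
      have hPj : P j = x j := by simp [hP, hjS]
      have hμxj : μ ≤ x j := Finset.inf'_le x (Finset.mem_univ j)
      have ha := hSP P j μ
      rw [hPj, ih] at ha
      have hb := sp_back hSP P j μ
      rw [ih] at hb
      set b := f (Function.update P j μ) with hbdef
      have e1 : |μ - y| = μ - y := abs_of_nonneg (by linarith)
      rw [e1] at hb
      have e2 : |x j - y| = x j - y := abs_of_nonneg (by linarith [hcon j])
      rw [e2] at ha
      have hble : b ≤ 2*μ - y := by
        rcases abs_cases (μ - b) with ⟨he, _⟩ | ⟨he, _⟩ <;> rw [he] at hb <;> linarith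
      rcases abs_cases (x j - b) with ⟨he, _⟩ | ⟨he, _⟩ <;> rw [he] at ha
      · -- x j - b ≥ x j - y ⟹ b ≤ y ; and b ≥ y from hb
        rcases abs_cases (μ - b) with ⟨he2, _⟩ | ⟨he2, _⟩ <;> rw [he2] at hb <;> linarith
      · -- b ≥ 2 x j - y ≥ 2μ - y, combined with b ≤ 2μ - y: x j = μ
        exfalso
        have hxjμ : x j = μ := by linarith
        have hPP : Function.update P j μ = P := by
          rw [← hxjμ, ← hPj]; exact Function.update_eq_self j P
        rw [hPP, ih] at hbdef
        linarith [hcon j]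
  have hfin := key Finset.univ
  simp only [Finset.mem_univ, if_true] at hfin
  rw [hUN μ] at hfin
  linarith

lemma sp_neg {f : (ι → ℝ) → ℝ} (hSP : SP f) : SP (fun v => -f (fun k => -v k)) := by
  intro x i t
  have h := hSP (fun k => -x k) i (-t)
  have hupd : (fun k => -(Function.update x i t) k) = Function.update (fun k => -x k) i (-t) := by
    funext k
    by_cases hk : k = i
    · subst hk; simp
    · simp [Function.update_of_ne hk]
  have e1 : ∀ c : ℝ, |x i - -c| = |(-x i) - c| := by
    intro c; rw [show x i - -c = -((-x i) - c) by ring, abs_neg]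
  simp only [e1]
  rw [hupd]
  simpa using h

lemma un_neg {f : (ι → ℝ) → ℝ} (hUN : UN f) : UN (fun v => -f (fun k => -v k)) := by
  intro c
  simp only []
  rw [show (fun (_ : ι) => -(c : ℝ)) = (fun (_ : ι) => (-c : ℝ)) from rfl, hUN (-c)]
  ring

def memb (i j : ι) (hij : i ≠ j) (v : {k : ι // k ≠ j} → ℝ) : ι → ℝ :=
  fun k => if h : k = j then v ⟨i, hij⟩ else v ⟨k, h⟩

lemma memb_update_self (i j : ι) (hij : i ≠ j) (v : {k : ι // k ≠ j} → ℝ) (t : ℝ) :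
    memb i j hij (Function.update v ⟨i, hij⟩ t) =
      Function.update (Function.update (memb i j hij v) i t) j t := by
  funext k
  by_cases hk : k = j
  · subst hk; simp [memb]
  · rw [Function.update_of_ne hk, memb]
    simp only [dif_neg hk]
    by_cases hki : k = i
    · subst hki
      rw [Function.update_self, Function.update_self]
    · rw [Function.update_of_ne (fun h => hki (Subtype.ext_iff.mp h)),
        Function.update_of_ne hki, memb]
      simp only [dif_neg hk]

lemma memb_update_other (i j : ι) (hij : i ≠ j) (v : {k : ι // k ≠ j} → ℝ)
    (a : {k : ι // k ≠ j}) (ha : a ≠ ⟨i, hij⟩) (t : ℝ) :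
    memb i j hij (Function.update v a t) = Function.update (memb i j hij v) a.val t := by
  funext k
  by_cases hk : k = j
  · subst hk
    simp [memb, Function.update_of_ne (Ne.symm ha), Function.update_of_ne (fun h => a.2 h.symm)]
  · rw [memb]; simp only [dif_neg hk]
    by_cases hka : (⟨k, hk⟩ : {k : ι // k ≠ j}) = a
    · have hkv : k = a.val := by rw [← hka]
      rw [hka, Function.update_self, hkv, Function.update_self]
    · have hkav : k ≠ a.val := fun h => hka (Subtype.ext h)
      rw [Function.update_of_ne hka, Function.update_of_ne hkav, memb]
      simp only [dif_neg hk]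

lemma sp_memb {f : (ι → ℝ) → ℝ} (hSP : SP f) (i j : ι) (hij : i ≠ j) :
    SP (fun v => f (memb i j hij v)) := by
  intro v a t
  simp only []
  by_cases ha : a = ⟨i, hij⟩
  · subst ha
    rw [memb_update_self]
    set P := memb i j hij v with hP
    have hPi : P i = v ⟨i, hij⟩ := by rw [hP, memb]; simp only [dif_neg hij]
    have hPj : P j = v ⟨i, hij⟩ := by rw [hP]; simp [memb]
    have h1 := hSP P i t
    rw [hPi] at h1
    have h2 := hSP (Function.update P i t) j t
    have e : Function.update P i t j = P j := Function.update_of_ne (Ne.symm hij) t P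
    rw [e, hPj] at h2
    exact le_trans h1 h2
  · rw [memb_update_other i j hij v a ha t]
    have h := hSP (memb i j hij v) a.val t
    have hPa : memb i j hij v a.val = v a := by
      rw [memb]; simp [a.2]
    rw [hPa] at h
    exact h

lemma un_memb {f : (ι → ℝ) → ℝ} (hUN : UN f) (i j : ι) (hij : i ≠ j) :
    UN (fun v => f (memb i j hij v)) := by
  intro c
  simp only []
  have : memb i j hij (fun _ => c) = fun _ => c := by
    funext k; rw [memb]; by_cases hk : k = j <;> simp [hk]
  rw [this, hUN]

lemma card_memb (j : ι) : Fintype.card {k : ι // k ≠ j} = Fintype.card ι - 1 := by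
  have h1 : Fintype.card {k : ι // k = j} = 1 := Fintype.card_subtype_eq j
  have h2 := Fintype.card_subtype_compl (fun k : ι => k = j)
  rw [h1] at h2
  exact h2

lemma memb_def (i j : ι) (hij : i ≠ j) (v : {k : ι // k ≠ j} → ℝ) (k : ι) :
    memb i j hij v k = if h : k = j then v ⟨i, hij⟩ else v ⟨k, h⟩ := rfl

theorem main : ∀ (N : ℕ) (ι : Type) [DecidableEq ι] [Fintype ι],
    Fintype.card ι ≤ N → ∀ f : (ι → ℝ) → ℝ, SP f → UN f →
    ∀ (x : ι → ℝ) (i : ι),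
      (f x < x i → ∀ t : ℝ, f x ≤ t → f (Function.update x i t) = f x) ∧
      (x i < f x → ∀ t : ℝ, t ≤ f x → f (Function.update x i t) = f x) := by
  intro N
  induction N with
  | zero =>
    intro ι _ _ hc f _ _ x i
    exact ((Fintype.card_eq_zero_iff.mp (Nat.le_zero.mp hc)).false i).elim
  | succ N ih =>
    intro ι instD instF hc f hSP hUN
    have hA : ∀ g : (ι → ℝ) → ℝ, SP g → UN g → ∀ (x : ι → ℝ) (i : ι),
        g x < x i → ∀ t : ℝ, g x ≤ t → g (Function.update x i t) = g x := by
      intro g hSPg hUNg x i hlt t ht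
      haveI : Nonempty ι := ⟨i⟩
      obtain ⟨j₀, hj₀⟩ := exists_le hSPg hUNg x
      have hij : j₀ ≠ i := by intro h; rw [h] at hj₀; linarith
      have hji : i ≠ j₀ := Ne.symm hij
      -- base segment [g x, x i]
      have hbase : ∀ u : ℝ, g x ≤ u → u ≤ x i → g (Function.update x i u) = g x := by
        intro u hu1 hu2
        have hF2 := sp_back hSPg x i u
        have hF3 := hSPg x i u
        set w := g (Function.update x i u) with hw
        rw [abs_of_nonneg (by linarith : (0:ℝ) ≤ u - g x)] at hF2
        rw [abs_of_nonneg (by linarith : (0:ℝ) ≤ x i - g x)] at hF3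
        have hwu : w ≤ 2*u - g x := by
          rcases abs_cases (u - w) with ⟨he, _⟩ | ⟨he, _⟩ <;> rw [he] at hF2 <;> linarith
        have hwl : g x ≤ w := by
          rcases abs_cases (u - w) with ⟨he, _⟩ | ⟨he, _⟩ <;> rw [he] at hF2 <;> linarith
        rcases abs_cases (x i - w) with ⟨he, _⟩ | ⟨he, _⟩ <;> rw [he] at hF3
        · linarith
        · exfalso
          have hus : u = x i := by linarith
          have hwx : w = g x := by rw [hw, hus, Function.update_eq_self]
          linarith
      -- absorption step
      have habs : ∀ c : ℝ, g x < c → g (Function.update x i c) = g x →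
          ∀ m : ℝ, c < m → m < 2*c - g x → g (Function.update x i m) = g x := by
        intro c hc1 hc2 m hm1 hm2
        have hF2 := sp_back hSPg x i m
        set w := g (Function.update x i m) with hw
        rw [abs_of_nonneg (by linarith : (0:ℝ) ≤ m - g x)] at hF2
        have hwl : g x ≤ w := by
          rcases abs_cases (m - w) with ⟨he, _⟩ | ⟨he, _⟩ <;> rw [he] at hF2 <;> linarith
        have hF3 := hSPg (Function.update x i c) i m
        rw [Function.update_self, Function.update_idem, hc2, ← hw] at hF3
        rw [abs_of_nonneg (by linarith : (0:ℝ) ≤ c - g x)] at hF3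
        rcases abs_cases (c - w) with ⟨he, _⟩ | ⟨he, _⟩ <;> rw [he] at hF3
        · linarith
        · exfalso
          have hmw : m < w := by linarith
          have hride : g (Function.update (Function.update x i m) j₀ m) = w := by
            rw [hw]
            refine ride hSPg (Function.update x i m) j₀ m ?_ ?_
            · rw [Function.update_of_ne hij]; linarith
            · rw [← hw]; linarith
          have hemb : memb i j₀ hji (fun a => Function.update x i m a.val) =
              Function.update (Function.update x i m) j₀ m := by
            funext k
            rw [memb_def]
            by_cases hk : k = j₀
            · subst hk
              simp
            · simp only [dif_neg hk]
              rw [Function.update_of_ne hk]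
          have hFv0 : g (memb i j₀ hji (fun a => Function.update x i m a.val)) = w := by
            rw [hemb, hride]
          have hcard' : Fintype.card {k : ι // k ≠ j₀} ≤ N := by
            rw [card_memb]
            exact Nat.le_of_succ_le_succ (le_trans (Nat.succ_le_succ (Nat.sub_le_sub_right hc 1)) (by
              omega))
          have hB := (ih {k : ι // k ≠ j₀} hcard'
            (fun v => g (memb i j₀ hji v)) (sp_memb hSPg i j₀ hji) (un_memb hUNg i j₀ hji)
            (fun a => Function.update x i m a.val) ⟨i, hji⟩).2
          simp only [] at hB
          have hvio : Function.update x i m (⟨i, hji⟩ : {k : ι // k ≠ j₀}).val = m := by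
            simp only [Function.update_self]
          have hkey := hB (by rw [hFv0, hvio]; exact hmw) (g x) (by rw [hFv0]; linarith)
          have hemb2 : memb i j₀ hji (Function.update (fun a : {k : ι // k ≠ j₀} =>
              Function.update x i m a.val) ⟨i, hji⟩ (g x)) =
              Function.update (Function.update x i (g x)) j₀ (g x) := by
            funext k
            rw [memb_def]
            by_cases hk : k = j₀
            · subst hk
              simp
            · simp only [dif_neg hk]
              rw [Function.update_of_ne hk]
              by_cases hki : k = i
              · subst hki
                have : (⟨k, hk⟩ : {k : ι // k ≠ j₀}) = ⟨k, hji⟩ := rfl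
                rw [this, Function.update_self, Function.update_self]
              · have hne : (⟨k, hk⟩ : {k : ι // k ≠ j₀}) ≠ ⟨i, hji⟩ :=
                  fun h => hki (Subtype.ext_iff.mp h)
                rw [Function.update_of_ne hne]
                simp only [Function.update_of_ne hki]
          have m1 : g (Function.update x i (g x)) = g x := move_to_fac hSPg x i
          have m2 := move_to_fac hSPg (Function.update x i (g x)) j₀
          rw [m1] at m2
          rw [hemb2, m2, hFv0] at hkey
          linarith
      -- iteration
      have hiter : ∀ kk : ℕ, ∀ u : ℝ, g x ≤ u → u ≤ g x + (3/2:ℝ)^kk * (x i - g x) →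
          g (Function.update x i u) = g x := by
        intro kk
        induction kk with
        | zero =>
          intro u h1 h2
          refine hbase u h1 ?_
          rw [pow_zero, one_mul] at h2; linarith
        | succ kk ihk =>
          intro u h1 h2
          by_cases hcase : u ≤ g x + (3/2:ℝ)^kk * (x i - g x)
          · exact ihk u h1 hcase
          · push_neg at hcase
            have hpow : (0:ℝ) < (3/2:ℝ)^kk * (x i - g x) :=
              mul_pos (by positivity) (by linarith)
            refine habs (g x + (3/2:ℝ)^kk * (x i - g x)) (by linarith)
              (ihk _ (by linarith) le_rfl) u hcase ?_
            rw [pow_succ] at h2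
            nlinarith [hpow]
      obtain ⟨kk, hkk⟩ : ∃ kk : ℕ, (t - g x) / (x i - g x) < (3/2:ℝ)^kk :=
        pow_unbounded_of_one_lt _ (by norm_num)
      refine hiter kk t ht ?_
      rw [div_lt_iff₀ (by linarith)] at hkk
      nlinarith
    intro x i
    refine ⟨hA f hSP hUN x i, ?_⟩
    intro hx t ht
    have hneg := hA (fun v : ι → ℝ => -f (fun k => -v k)) (sp_neg hSP) (un_neg hUN)
      (fun k => -x k) i (by simpa using neg_lt_neg hx) (-t)
      (by simpa using neg_le_neg ht)
    have e1 : (fun k => -(Function.update (fun k => -x k) i (-t)) k) = Function.update x i t := by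
      funext k
      by_cases hk : k = i
      · subst hk; simp
      · simp [Function.update_of_ne hk]
    have e2 : (fun k => - -x k) = x := by funext k; simp
    rw [e1, e2] at hneg
    linarith

end UncompAux


open Finset

/-- Any deterministic strategyproof unanimous mechanism on the real line is
uncompromising. -/
theorem stmt2 {n : ℕ} (f : (Fin (n+1) → ℝ) → ℝ)
    (hSP : ∀ (x : Fin (n+1) → ℝ) (i : Fin (n+1)) (xi' : ℝ),
      |x i - f x| ≤ |x i - f (Function.update x i xi')|)
    (hU : ∀ c : ℝ, f (fun _ => c) = c) :
    ∀ (x : Fin (n+1) → ℝ) (i : Fin (n+1)),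
      (f x < x i → ∀ xi' : ℝ, f x ≤ xi' → f (Function.update x i xi') = f x) ∧
      (x i < f x → ∀ xi' : ℝ, xi' ≤ f x → f (Function.update x i xi') = f x) := by
  intro x i
  exact UncompAux.main (n+1) (Fin (n+1)) (by simp) f hSP hU x i
end

section
/- Any deterministic strategyproof unanimous mechanism f : ℝⁿ → ℝ always outputs a point in the interval [min_i x_i, max_i x_i]. -/
open Finset

lemma upperAux {n : ℕ} (f : (Fin (n+1) → ℝ) → ℝ)
    (hSP : ∀ (x : Fin (n+1) → ℝ) (i : Fin (n+1)) (xi' : ℝ),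
      |x i - f x| ≤ |x i - f (Function.update x i xi')|)
    (hU : ∀ c : ℝ, f (fun _ => c) = c) (x : Fin (n+1) → ℝ) :
    f x ≤ hiF x := by
  set M := hiF x with hM
  have hxM : ∀ i, x i ≤ M := fun i => Finset.le_sup' x (mem_univ i)
  set p : ℕ → Fin (n+1) → ℝ := fun k i => if (i : ℕ) < k then x i else M with hp
  have key : ∀ k, f (p k) ≤ M := by
    intro k
    induction k with
    | zero =>
      have : p 0 = fun _ => M := by
        funext j; simp [hp]
      rw [this, hU]
    | succ k ih =>
      by_cases hk : k < n + 1
      · set i : Fin (n+1) := ⟨k, hk⟩ with hi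
        have hik : (i : ℕ) = k := rfl
        by_cases hx : x i = M
        · have hpe : p (k+1) = p k := by
            funext j
            simp only [hp]
            by_cases h : (j : ℕ) < k
            · simp [h, Nat.lt_succ_of_lt h]
            · by_cases h' : (j : ℕ) < k + 1
              · have : j = i := Fin.ext (by omega)
                simp [h, h', this, hx]
              · simp [h, h']
          rw [hpe]; exact ih
        · have h1 : Function.update (p (k+1)) i M = p k := by
            funext j
            rcases eq_or_ne j i with rfl | hj
            · simp [hp, Function.update_self, hik]
            · have hjk : (j : ℕ) ≠ k := fun h => hj (Fin.ext h)
              rw [Function.update_of_ne hj]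
              simp only [hp]
              by_cases h : (j : ℕ) < k
              · simp [h, Nat.lt_succ_of_lt h]
              · simp [h, show ¬ (j : ℕ) < k + 1 by omega]
          have h2 : Function.update (p k) i (x i) = p (k+1) := by
            funext j
            rcases eq_or_ne j i with rfl | hj
            · simp [hp, Function.update_self, hik]
            · have hjk : (j : ℕ) ≠ k := fun h => hj (Fin.ext h)
              rw [Function.update_of_ne hj]
              simp only [hp]
              by_cases h : (j : ℕ) < k
              · simp [h, Nat.lt_succ_of_lt h]
              · simp [h, show ¬ (j : ℕ) < k + 1 by omega]
          have hpi1 : p (k+1) i = x i := by simp [hp, hik]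
          have hpi0 : p k i = M := by simp [hp, hik]
          have sp1 : |x i - f (p (k+1))| ≤ |x i - f (p k)| := by
            have := hSP (p (k+1)) i M
            rwa [hpi1, h1] at this
          have sp2 : |M - f (p k)| ≤ |M - f (p (k+1))| := by
            have := hSP (p k) i (x i)
            rwa [hpi0, h2] at this
          set y := f (p k)
          set z := f (p (k+1))
          by_contra hz
          push_neg at hz
          have hxiM : x i ≤ M := hxM i
          have hxilt : x i < M := lt_of_le_of_ne hxiM hx
          have e1 : |x i - z| = z - x i := by
            rw [abs_sub_comm, abs_of_nonneg (by linarith)]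
          have e2 : |M - z| = z - M := by
            rw [abs_sub_comm, abs_of_nonneg (by linarith)]
          rw [e1] at sp1
          rw [e2] at sp2
          rcases le_or_gt (x i) y with h | h
          · have : |x i - y| = y - x i := by
              rw [abs_sub_comm, abs_of_nonneg (by linarith)]
            rw [this] at sp1
            linarith
          · have e3 : |x i - y| = x i - y := abs_of_nonneg (by linarith)
            have e4 : |M - y| = M - y := abs_of_nonneg (by linarith)
            rw [e3] at sp1
            rw [e4] at sp2
            linarith
      · have hpe : p (k+1) = p k := by
          funext j
          have hj : (j : ℕ) < k := by omega
          simp [hp, hj, Nat.lt_succ_of_lt hj]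
        rw [hpe]; exact ih
  have hpx : p (n+1) = x := by
    funext j
    simp [hp, j.isLt]
  have := key (n+1)
  rwa [hpx] at this

/-- Any deterministic strategyproof unanimous mechanism always outputs a point
between the smallest and the largest reported locations. -/
theorem stmt3 {n : ℕ} (f : (Fin (n+1) → ℝ) → ℝ)
    (hSP : ∀ (x : Fin (n+1) → ℝ) (i : Fin (n+1)) (xi' : ℝ),
      |x i - f x| ≤ |x i - f (Function.update x i xi')|)
    (hU : ∀ c : ℝ, f (fun _ => c) = c) :
    ∀ x : Fin (n+1) → ℝ, f x ∈ Set.Icc (loF x) (hiF x) := by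
  intro x
  refine ⟨?_, upperAux f hSP hU x⟩
  -- lower bound via negation symmetry
  set F : (Fin (n+1) → ℝ) → ℝ := fun y => -f (fun i => -y i) with hF
  have hFSP : ∀ (y : Fin (n+1) → ℝ) (i : Fin (n+1)) (yi' : ℝ),
      |y i - F y| ≤ |y i - F (Function.update y i yi')| := by
    intro y i yi'
    have hupd : (fun j => -(Function.update y i yi') j)
        = Function.update (fun j => -y j) i (-yi') := by
      funext j
      rcases eq_or_ne j i with rfl | hj
      · simp
      · simp [Function.update_of_ne hj]
    have := hSP (fun j => -y j) i (-yi')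
    simp only [hF, hupd]
    have e1 : |y i - -f fun i_1 => -y i_1| = |(fun j => -y j) i - f (fun j => -y j)| := by
      rw [abs_sub_comm]
      congr 1
      ring
    rw [e1]
    calc |(fun j => -y j) i - f (fun j => -y j)|
        ≤ |(fun j => -y j) i - f (Function.update (fun j => -y j) i (-yi'))| := this
      _ = |y i - -f (Function.update (fun j => -y j) i (-yi'))| := by
          rw [abs_sub_comm]; congr 1; ring
  have hFU : ∀ c : ℝ, F (fun _ => c) = c := by
    intro c
    simp only [hF]
    rw [show (fun i : Fin (n+1) => -c) = (fun _ : Fin (n+1) => -c) from rfl, hU]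
    ring
  have h := upperAux F hFSP hFU (fun i => -x i)
  have hFx : F (fun i => -x i) = -f x := by
    simp only [hF, neg_neg]
  have hhi : hiF (fun i => -x i) = -loF x := by
    apply le_antisymm
    · apply Finset.sup'_le
      intro i _
      have : loF x ≤ x i := Finset.inf'_le x (mem_univ i)
      show -x i ≤ -loF x
      linarith
    · rw [neg_le]
      apply Finset.le_inf'
      intro i _
      have : (fun i => -x i) i ≤ hiF (fun i => -x i) :=
        Finset.le_sup' (fun i => -x i) (mem_univ i)
      simp only at this
      linarith
  rw [hFx, hhi] at h
  linarith
end

section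
/- For every η ≥ 0 and every δ > 0, no deterministic strategyproof mechanism with prediction on the real line achieves approximation ratio 1 + min(1, η) − δ for the maximum cost objective over all instances with prediction error at most η. -/
open Finset

lemma one_ne_zero_fin {n : ℕ} : (1 : Fin (n+2)) ≠ 0 := by
  simp [Fin.ext_iff]

lemma sup2 {n : ℕ} (g : Fin (n+2) → ℝ) (a b : ℝ) (h0 : g 0 = a)
    (h1 : ∀ i : Fin (n+2), i ≠ 0 → g i = b) :
    (univ : Finset (Fin (n+2))).sup' univ_nonempty g = max a b := by
  apply le_antisymm
  · apply Finset.sup'_le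
    intro i _
    by_cases hi : i = 0
    · rw [hi, h0]; exact le_max_left a b
    · rw [h1 i hi]; exact le_max_right a b
  · apply max_le
    · rw [← h0]; exact Finset.le_sup' g (mem_univ 0)
    · rw [← h1 1 one_ne_zero_fin]; exact Finset.le_sup' g (mem_univ 1)

lemma inf2 {n : ℕ} (g : Fin (n+2) → ℝ) (a b : ℝ) (h0 : g 0 = a)
    (h1 : ∀ i : Fin (n+2), i ≠ 0 → g i = b) :
    (univ : Finset (Fin (n+2))).inf' univ_nonempty g = min a b := by
  apply le_antisymm
  · apply le_min
    · rw [← h0]; exact Finset.inf'_le g (mem_univ 0)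
    · rw [← h1 1 one_ne_zero_fin]; exact Finset.inf'_le g (mem_univ 1)
  · apply Finset.le_inf'
    intro i _
    by_cases hi : i = 0
    · rw [hi, h0]; exact min_le_left a b
    · rw [h1 i hi]; exact min_le_right a b

set_option maxHeartbeats 1600000 in
/-- For any error bound η ≥ 0 and δ > 0, no deterministic strategyproof mechanism
with prediction achieves a (1 + min(1, η) − δ)-approximation over all instances with
prediction error at most η. -/
theorem stmt4 (η δ : ℝ) (hη : 0 ≤ η) (hδ : 0 < δ) {n : ℕ}
    (f : (Fin (n+2) → ℝ) → ℝ → ℝ)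
    (hSP : ∀ (x : Fin (n+2) → ℝ) (π : ℝ) (i : Fin (n+2)) (xi' : ℝ),
      |x i - f x π| ≤ |x i - f (Function.update x i xi') π|) :
    ∃ (x : Fin (n+2) → ℝ) (π : ℝ),
      0 < rF x ∧ |π - midF x| ≤ η * rF x ∧
      (1 + min 1 η - δ) * rF x < MC x (f x π) := by
  set ε := min 1 η with hεdef
  have hε0 : (0:ℝ) ≤ ε := le_min zero_le_one hη
  have hε1 : ε ≤ 1 := min_le_left _ _
  have hεη : ε ≤ η := min_le_right _ _
  set x : Fin (n+2) → ℝ := fun i => if i = 0 then (-1:ℝ) else 1 with hxdef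
  have hx0 : x 0 = -1 := by simp [hxdef]
  have hx1 : ∀ i : Fin (n+2), i ≠ 0 → x i = 1 := by intro i hi; simp [hxdef, hi]
  have hlo : loF x = -1 := by
    unfold loF; rw [inf2 x (-1) 1 hx0 hx1]; norm_num
  have hhi : hiF x = 1 := by
    unfold hiF; rw [sup2 x (-1) 1 hx0 hx1]; norm_num
  have hmid : midF x = 0 := by rw [midF, hlo, hhi]; norm_num
  have hr : rF x = 1 := by rw [rF, hlo, hhi]; norm_num
  set p := f x ε with hpdef
  have hMC : MC x p = max |(-1) - p| |1 - p| := by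
    unfold MC
    exact sup2 _ _ _ (by rw [hx0]) (fun i hi => by rw [hx1 i hi])
  by_cases hcase : ε - δ < |p|
  · refine ⟨x, ε, ?_, ?_, ?_⟩
    · rw [hr]; norm_num
    · rw [hmid, hr, sub_zero, mul_one, abs_of_nonneg hε0]; exact hεη
    · rw [hr, ← hpdef, hMC]
      rcases lt_abs.mp hcase with h | h
      · have h2 : 1 + p ≤ max |(-1) - p| |1 - p| := by
          refine le_trans ?_ (le_max_left _ _)
          rw [show (-1:ℝ) - p = -(1+p) by ring, abs_neg]
          exact le_abs_self _
        linarith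
      · have h2 : 1 - p ≤ max |(-1) - p| |1 - p| :=
          le_trans (le_abs_self _) (le_max_right _ _)
        linarith
  · push_neg at hcase
    obtain ⟨hpl, hpu⟩ := abs_le.mp hcase
    have hδε : δ ≤ ε := by have := abs_nonneg p; linarith
    have hηpos : (0:ℝ) < η := lt_of_lt_of_le hδ (le_trans hδε hεη)
    have h1εδ : (0:ℝ) < 1 + ε - δ := by linarith
    have h1η : (0:ℝ) < 1 + η := by linarith
    have hp1 : p < 1 := by linarith
    have hpm1 : (-1:ℝ) < p := by linarith
    set z₁ := (2*p - 1 + ε - δ)/(1+ε-δ) with hz₁def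
    set U := min p ((2*ε+η-1)/(1+η)) with hUdef
    have hz1p : z₁ < p := by
      rw [hz₁def, div_lt_iff₀ h1εδ]
      linarith [mul_pos (show (0:ℝ) < 1 - p by linarith)
        (show (0:ℝ) < 1 - ε + δ by linarith)]
    have hz1U2 : z₁ < (2*ε+η-1)/(1+η) := by
      rw [hz₁def, div_lt_div_iff₀ h1εδ h1η]
      rcases le_total η 1 with hc | hc
      · have hεe : ε = η := by rw [hεdef, min_eq_right hc]
        rw [hεe]
        linarith [mul_le_mul_of_nonneg_right
          (show 2*p - 1 + η - δ ≤ 3*η - 3*δ - 1 by linarith) (le_of_lt h1η)]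
      · have hεe : ε = 1 := by rw [hεdef, min_eq_left hc]
        rw [hεe]
        linarith [mul_pos h1η (show (0:ℝ) < 1 - p by linarith)]
    have hz1U : z₁ < U := lt_min hz1p hz1U2
    set z := (z₁ + U)/2 with hzdef
    have hzz1 : z₁ < z := by rw [hzdef]; linarith
    have hzU : z < U := by rw [hzdef]; linarith
    have hzp : z < p := lt_of_lt_of_le hzU (min_le_left _ _)
    have hz_ub' : z * (1+η) ≤ 2*ε + η - 1 := by
      have h2 : z ≤ (2*ε+η-1)/(1+η) := le_of_lt (lt_of_lt_of_le hzU (min_le_right _ _))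
      exact (le_div_iff₀ h1η).mp h2
    have hz1lb : (-1:ℝ) ≤ z₁ := by
      rw [hz₁def, le_div_iff₀ h1εδ]; linarith
    have hzm1 : (-1:ℝ) < z := by
      have hU1 : (-1:ℝ) < U := lt_min hpm1 (by rw [lt_div_iff₀ h1η]; linarith)
      rw [hzdef]; linarith
    have hz1' : z < 1 := lt_trans hzp hp1
    set y := Function.update x 0 z with hydef
    have hy0 : y 0 = z := by rw [hydef]; simp
    have hy1 : ∀ i : Fin (n+2), i ≠ 0 → y i = 1 := by
      intro i hi; rw [hydef, Function.update_of_ne hi, hx1 i hi]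
    set q := f y ε with hqdef
    have SP1 : 1 + p ≤ |(-1) - q| := by
      have h := hSP x ε 0 z
      rw [← hydef, ← hpdef, ← hqdef, hx0,
        show (-1:ℝ) - p = -(1+p) by ring, abs_neg, abs_of_nonneg (by linarith)] at h
      exact h
    have SP2' : |z - q| ≤ p - z := by
      have hyx : Function.update y 0 (-1) = x := by
        rw [hydef, Function.update_idem, ← hx0, Function.update_eq_self]
      have h := hSP y ε 0 (-1)
      rw [hyx, ← hpdef, ← hqdef, hy0, abs_of_neg (show z - p < 0 by linarith)] at h
      linarith
    obtain ⟨hA, hB⟩ := abs_le.mp SP2'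
    have hqp : q ≤ p := by linarith
    have hq2 : 2*z - p ≤ q := by linarith
    have hq_eq : q = p := by
      rcases le_abs.mp SP1 with h | h
      · exfalso; linarith
      · exact le_antisymm hqp (by linarith)
    clear_value ε x p z₁ U z y q
    have hloy : loF y = z := by
      unfold loF; rw [inf2 y z 1 hy0 hy1, min_eq_left (le_of_lt hz1')]
    have hhiy : hiF y = 1 := by
      unfold hiF; rw [sup2 y z 1 hy0 hy1, max_eq_right (le_of_lt hz1')]
    refine ⟨y, ε, ?_, ?_, ?_⟩
    · rw [rF, hloy, hhiy]; linarith
    · rw [midF, rF, hloy, hhiy]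
      rw [abs_le]
      constructor
      · linarith
      · rcases le_total η 1 with hc | hc
        · have hεe : ε = η := by rw [hεdef, min_eq_right hc]
          rw [hεe]
          linarith [mul_nonneg (show (0:ℝ) ≤ z + 1 by linarith)
            (show (0:ℝ) ≤ 1 - η by linarith)]
        · have hεe : ε = 1 := by rw [hεdef, min_eq_left hc]
          rw [hεe]
          linarith [mul_nonneg (show (0:ℝ) ≤ 1 - z by linarith)
            (show (0:ℝ) ≤ η - 1 by linarith)]
    · rw [← hqdef, hq_eq]
      have hMCy : MC y p = max |z - p| |1 - p| := by
        unfold MC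
        exact sup2 _ _ _ (by rw [hy0]) (fun i hi => by rw [hy1 i hi])
      rw [hMCy, rF, hloy, hhiy]
      have h1p : (1:ℝ) - p ≤ max |z - p| |1 - p| :=
        le_trans (le_abs_self _) (le_max_right _ _)
      have key : 2*p - 1 + ε - δ < z*(1+ε-δ) := by
        have h := hzz1
        rw [hz₁def, div_lt_iff₀ h1εδ] at h
        exact h
      linarith [key, h1p]
end

section
/- Fix ε ∈ (0, 1]. If f is a deterministic strategyproof unanimous mechanism with prediction on the real line that is (2−ε)-consistent, then for every profile x and prediction π with π = (min_i x_i + max_i x_i)/2 (a correct prediction), f(x, π) = π. -/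
open Finset

private lemma moveOne {n : ℕ} (f : (Fin (n+1) → ℝ) → ℝ → ℝ)
    (hSP : ∀ (x : Fin (n+1) → ℝ) (π : ℝ) (i : Fin (n+1)) (xi' : ℝ),
      |x i - f x π| ≤ |x i - f (Function.update x i xi') π|)
    (x : Fin (n+1) → ℝ) (π : ℝ) (i : Fin (n+1)) :
    f (Function.update x i (f x π)) π = f x π := by
  have h := hSP (Function.update x i (f x π)) π i (x i)
  rw [Function.update_idem, Function.update_eq_self, Function.update_self] at h
  have h0 : |f x π - f (Function.update x i (f x π)) π| = 0 :=
    le_antisymm (by simpa using h) (abs_nonneg _)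
  have := abs_eq_zero.mp h0
  linarith

private lemma moveAll {n : ℕ} (f : (Fin (n+1) → ℝ) → ℝ → ℝ)
    (hSP : ∀ (x : Fin (n+1) → ℝ) (π : ℝ) (i : Fin (n+1)) (xi' : ℝ),
      |x i - f x π| ≤ |x i - f (Function.update x i xi') π|)
    (x : Fin (n+1) → ℝ) (π : ℝ) (s : Finset (Fin (n+1))) :
    f (fun t => if t ∈ s then f x π else x t) π = f x π := by
  classical
  induction s using Finset.induction_on with
  | empty => simp
  | @insert k s hk ih =>
    have hfun : (fun t => if t ∈ insert k s then f x π else x t)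
        = Function.update (fun t => if t ∈ s then f x π else x t) k
            (f (fun t => if t ∈ s then f x π else x t) π) := by
      funext t
      by_cases ht : t = k
      · subst ht; simp [ih]
      · simp [Function.update_of_ne ht, mem_insert, ht]
    rw [hfun, moveOne f hSP, ih]

set_option maxHeartbeats 1000000 in
/-- Any deterministic SP unanimous (2−ε)-consistent mechanism with prediction must
output the prediction whenever the prediction is correct. -/
theorem stmt5 {n : ℕ} (ε : ℝ) (hε0 : 0 < ε) (hε1 : ε ≤ 1)
    (f : (Fin (n+1) → ℝ) → ℝ → ℝ)
    (hSP : ∀ (x : Fin (n+1) → ℝ) (π : ℝ) (i : Fin (n+1)) (xi' : ℝ),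
      |x i - f x π| ≤ |x i - f (Function.update x i xi') π|)
    (hU : ∀ (c π : ℝ), f (fun _ => c) π = c)
    (hCons : ∀ x : Fin (n+1) → ℝ, MC x (f x (midF x)) ≤ (2 - ε) * rF x) :
    ∀ (x : Fin (n+1) → ℝ) (π : ℝ), π = midF x → f x π = π := by
  classical
  intro x π hπ
  subst hπ
  by_contra hne
  set m := midF x with hm
  set y := f x m with hy
  set a := loF x with ha
  set b := hiF x with hb
  have hax : ∀ i, a ≤ x i := fun i => inf'_le _ (mem_univ i)
  have hxb : ∀ i, x i ≤ b := fun i => le_sup' _ (mem_univ i)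
  have hab : a ≤ b := le_trans (hax 0) (hxb 0)
  have hmab : m = (a + b) / 2 := rfl
  rcases eq_or_lt_of_le hab with heq | hlt
  · -- constant profile
    have hxconst : x = fun _ => a := funext fun i => le_antisymm (heq ▸ hxb i) (hax i)
    have hma : m = a := by rw [hmab, ← heq]; ring
    exact hne (by rw [hy, hxconst, hU, hma])
  · -- a < b
    have ham : a ≤ m := by rw [hmab]; linarith
    have hmb : m ≤ b := by rw [hmab]; linarith
    obtain ⟨i0, -, hi0'⟩ := exists_mem_eq_inf' (univ_nonempty) x
    obtain ⟨j0, -, hj0'⟩ := exists_mem_eq_sup' (univ_nonempty) x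
    have hi0 : a = x i0 := hi0'
    have hj0 : b = x j0 := hj0' 
    -- hi0 : a = x i0 ; hj0 : b = x j0  (as loF/hiF defs)
    rcases lt_or_gt_of_ne hne with hym | hym
    · -- y < m : use the max agent j0
      set c := 2 * m - y with hc
      have hyc : y < c := by rw [hc]; linarith
      set w := fun t => if t ∈ univ.erase j0 then y else x t with hw
      have hfw : f w m = y := moveAll f hSP x m (univ.erase j0)
      set z := Function.update w j0 c with hz
      set y' := f z m with hy'
      have hwj : w j0 = b := by simp [hw, ← hj0]
      have hsp := hSP w m j0 c
      rw [← hz, ← hy', hfw, hwj] at hsp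
      have hzt : ∀ t, z t = if t = j0 then c else y := by
        intro t
        by_cases ht : t = j0
        · subst ht; simp [hz]
        · simp [hz, Function.update_of_ne ht, hw, ht]
      have hij : i0 ≠ j0 := by
        intro h; rw [h, ← hj0] at hi0; rw [← hi0] at hlt; exact lt_irrefl _ hlt
      have hloz : loF z = y := by
        apply le_antisymm
        · exact le_trans (inf'_le _ (mem_univ i0)) (by rw [hzt i0, if_neg hij])
        · exact le_inf' _ _ fun t _ => by rw [hzt t]; split <;> linarith
      have hhiz : hiF z = c := by
        apply le_antisymm
        · exact sup'_le _ _ fun t _ => by rw [hzt t]; split <;> linarith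
        · exact le_trans (le_of_eq (by rw [hzt j0, if_pos rfl])) (le_sup' _ (mem_univ j0))
      have hmidz : midF z = m := by
        rw [midF, hloz, hhiz, hc]; ring
      have hcons := hCons z
      rw [hmidz, ← hy', rF, hloz, hhiz] at hcons
      have h1 : |z j0 - y'| ≤ MC z y' := le_sup' (fun t => |z t - y'|) (mem_univ j0)
      have h2 : |z i0 - y'| ≤ MC z y' := le_sup' (fun t => |z t - y'|) (mem_univ i0)
      rw [hzt j0, if_pos rfl] at h1
      rw [hzt i0, if_neg hij] at h2
      have hby : b - y ≤ |b - y'| := by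
        rwa [abs_of_nonneg (by linarith : (0:ℝ) ≤ b - y)] at hsp
      rcases le_abs.mp hby with hcase | hcase
      · -- y' ≤ y
        have h3 : c - y' ≤ |c - y'| := le_abs_self _
        nlinarith [hcons, h1, h3, mul_pos hε0 (show (0:ℝ) < m - y by linarith)]
      · -- y' ≥ 2b - y
        have h3 : y' - y ≤ |y - y'| := by rw [abs_sub_comm]; exact le_abs_self _
        nlinarith [hcons, h2, h3, mul_pos hε0 (show (0:ℝ) < m - y by linarith)]
    · -- y > m : use the min agent i0
      set c := 2 * m - y with hc
      have hyc : c < y := by rw [hc]; linarith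
      set w := fun t => if t ∈ univ.erase i0 then y else x t with hw
      have hfw : f w m = y := moveAll f hSP x m (univ.erase i0)
      set z := Function.update w i0 c with hz
      set y' := f z m with hy'
      have hwj : w i0 = a := by simp [hw, ← hi0]
      have hsp := hSP w m i0 c
      rw [← hz, ← hy', hfw, hwj] at hsp
      have hzt : ∀ t, z t = if t = i0 then c else y := by
        intro t
        by_cases ht : t = i0
        · subst ht; simp [hz]
        · simp [hz, Function.update_of_ne ht, hw, ht]
      have hij : j0 ≠ i0 := by
        intro h; rw [h, ← hi0] at hj0; rw [← hj0] at hlt; exact lt_irrefl _ hlt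
      have hloz : loF z = c := by
        apply le_antisymm
        · exact le_trans (inf'_le _ (mem_univ i0)) (by rw [hzt i0, if_pos rfl])
        · exact le_inf' _ _ fun t _ => by rw [hzt t]; split <;> linarith
      have hhiz : hiF z = y := by
        apply le_antisymm
        · exact sup'_le _ _ fun t _ => by rw [hzt t]; split <;> linarith
        · have hzj : z j0 = y := by rw [hzt j0, if_neg hij]
          exact le_trans (le_of_eq hzj.symm) (le_sup' _ (mem_univ j0))
      have hmidz : midF z = m := by
        rw [midF, hloz, hhiz, hc]; ring
      have hcons := hCons z
      rw [hmidz, ← hy', rF, hloz, hhiz] at hcons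
      have h1 : |z i0 - y'| ≤ MC z y' := le_sup' (fun t => |z t - y'|) (mem_univ i0)
      have h2 : |z j0 - y'| ≤ MC z y' := le_sup' (fun t => |z t - y'|) (mem_univ j0)
      rw [hzt i0, if_pos rfl] at h1
      rw [hzt j0, if_neg hij] at h2
      have hay : y - a ≤ |a - y'| := by
        rwa [abs_sub_comm, abs_of_nonneg (by linarith : (0:ℝ) ≤ y - a)] at hsp
      rcases le_abs.mp hay with hcase | hcase
      · -- y' ≤ 2a - y
        have h3 : y - y' ≤ |y - y'| := le_abs_self _
        nlinarith [hcons, h2, h3, mul_pos hε0 (show (0:ℝ) < y - m by linarith)]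
      · -- y' ≥ y
        have h3 : y' - c ≤ |c - y'| := by rw [abs_sub_comm]; exact le_abs_self _
        nlinarith [hcons, h1, h3, mul_pos hε0 (show (0:ℝ) < y - m by linarith)]
end

section
/- Fix ε ∈ (0, 1]. The MinMaxP mechanism y = max(min_i x_i, min(max_i x_i, π)) is the unique deterministic strategyproof mechanism with prediction on the real line that is (2−ε)-consistent and has bounded robustness: any such mechanism f satisfies f(x, π) = max(min_i x_i, min(max_i x_i, π)) for all x, π. -/
open Finset

namespace SPaux

variable {n : ℕ}

lemma loF_le (x : Fin (n+1) → ℝ) (i : Fin (n+1)) : loF x ≤ x i :=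
  Finset.inf'_le _ (Finset.mem_univ i)

lemma le_hiF (x : Fin (n+1) → ℝ) (i : Fin (n+1)) : x i ≤ hiF x :=
  Finset.le_sup' _ (Finset.mem_univ i)

lemma loF_le_hiF (x : Fin (n+1) → ℝ) : loF x ≤ hiF x :=
  (loF_le x 0).trans (le_hiF x 0)

lemma exists_eq_hiF (x : Fin (n+1) → ℝ) : ∃ i, x i = hiF x := by
  obtain ⟨b, -, hb⟩ := Finset.exists_mem_eq_sup' (univ_nonempty) x
  exact ⟨b, hb.symm⟩

lemma exists_eq_loF (x : Fin (n+1) → ℝ) : ∃ i, x i = loF x := by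
  obtain ⟨b, -, hb⟩ := Finset.exists_mem_eq_inf' (univ_nonempty) x
  exact ⟨b, hb.symm⟩

lemma MC_ge (x : Fin (n+1) → ℝ) (y : ℝ) (i : Fin (n+1)) : |x i - y| ≤ MC x y :=
  Finset.le_sup' (fun i => |x i - y|) (Finset.mem_univ i)

lemma MC_le (x : Fin (n+1) → ℝ) (y m : ℝ) (h : ∀ i, |x i - y| ≤ m) : MC x y ≤ m :=
  Finset.sup'_le _ _ (fun i _ => h i)

lemma loF_const (c : ℝ) : loF (fun _ : Fin (n+1) => c) = c := Finset.inf'_const _ _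

lemma hiF_const (c : ℝ) : hiF (fun _ : Fin (n+1) => c) = c := Finset.sup'_const _ _

lemma hiF_upd {w t : ℝ} (i0 j : Fin (n+1)) (hj : j ≠ i0) :
    hiF (Function.update (fun _ => w) i0 t) = max w t := by
  apply le_antisymm
  · apply Finset.sup'_le
    intro i _
    rcases eq_or_ne i i0 with h | h
    · subst h; rw [Function.update_self]; exact le_max_right _ _
    · rw [Function.update_of_ne h]; exact le_max_left _ _
  · apply max_le
    · have := le_hiF (Function.update (fun _ => w) i0 t) j
      rwa [Function.update_of_ne hj] at this
    · have := le_hiF (Function.update (fun _ => w) i0 t) i0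
      rwa [Function.update_self] at this

lemma loF_upd {w t : ℝ} (i0 j : Fin (n+1)) (hj : j ≠ i0) :
    loF (Function.update (fun _ => w) i0 t) = min w t := by
  apply le_antisymm
  · apply le_min
    · have := loF_le (Function.update (fun _ => w) i0 t) j
      rwa [Function.update_of_ne hj] at this
    · have := loF_le (Function.update (fun _ => w) i0 t) i0
      rwa [Function.update_self] at this
  · apply Finset.le_inf'
    intro i _
    rcases eq_or_ne i i0 with h | h
    · subst h; rw [Function.update_self]; exact min_le_right _ _
    · rw [Function.update_of_ne h]; exact min_le_left _ _

end SPaux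

def negP {n : ℕ} (x : Fin (n+1) → ℝ) : Fin (n+1) → ℝ := fun i => -(x i)

namespace SPaux2
open SPaux

variable {n : ℕ}

lemma negP_negP (x : Fin (n+1) → ℝ) : negP (negP x) = x := by
  funext i; simp [negP]

lemma loF_negP (x : Fin (n+1) → ℝ) : loF (negP x) = -hiF x := by
  apply le_antisymm
  · obtain ⟨i, hi⟩ := exists_eq_hiF x
    have := loF_le (negP x) i
    simp only [negP] at this
    rw [← hi]; linarith
  · apply Finset.le_inf'
    intro i _
    have := le_hiF x i
    simp only [negP]
    linarith

lemma hiF_negP (x : Fin (n+1) → ℝ) : hiF (negP x) = -loF x := by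
  have := loF_negP (negP x)
  rw [negP_negP] at this
  linarith

lemma midF_negP (x : Fin (n+1) → ℝ) : midF (negP x) = -midF x := by
  unfold midF; rw [loF_negP, hiF_negP]; ring

lemma rF_negP (x : Fin (n+1) → ℝ) : rF (negP x) = rF x := by
  unfold rF; rw [loF_negP, hiF_negP]; ring

lemma MC_negP (x : Fin (n+1) → ℝ) (v : ℝ) : MC (negP x) v = MC x (-v) := by
  unfold MC
  congr 1
  funext i
  simp only [negP]
  rw [show -x i - v = -(x i - -v) by ring, abs_neg]

lemma update_negP (x : Fin (n+1) → ℝ) (i : Fin (n+1)) (t : ℝ) :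
    Function.update (negP x) i (-t) = negP (Function.update x i t) := by
  funext j
  rcases eq_or_ne j i with h | h
  · subst h; simp [negP]
  · simp [negP, Function.update_of_ne h]

end SPaux2

namespace SPmech
open SPaux SPaux2

variable {n : ℕ} (f : (Fin (n+1) → ℝ) → ℝ → ℝ)

/-- The reflected mechanism. -/
noncomputable def RefM : (Fin (n+1) → ℝ) → ℝ → ℝ := fun x ρ => -f (negP x) (-ρ)

def SP : Prop := ∀ (x : Fin (n+1) → ℝ) (π : ℝ) (i : Fin (n+1)) (xi' : ℝ),
      |x i - f x π| ≤ |x i - f (Function.update x i xi') π|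

lemma RefM_negP (x : Fin (n+1) → ℝ) (ρ : ℝ) : RefM f (negP x) (-ρ) = - f x ρ := by
  unfold RefM; rw [negP_negP, neg_neg]

lemma SP_RefM (hSP : SP f) : SP (RefM f) := by
  intro x π i t
  have h := hSP (negP x) (-π) i (-t)
  rw [update_negP] at h
  unfold RefM
  have e1 : ∀ (z : Fin (n+1) → ℝ) (v : ℝ), |x i - -v| = |negP z i - v| → True := fun _ _ _ => trivial
  calc |x i - -f (negP x) (-π)| = |negP x i - f (negP x) (-π)| := by
        simp only [negP]; rw [show x i - -f (negP x) (-π) = -(-x i - f (negP x) (-π)) by ring, abs_neg]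
    _ ≤ |negP x i - f (negP (Function.update x i t)) (-π)| := h
    _ = |x i - -f (negP (Function.update x i t)) (-π)| := by
        simp only [negP]; rw [show -x i - f (negP (Function.update x i t)) (-π) = -(x i - -f (negP (Function.update x i t)) (-π)) by ring, abs_neg]

/-- moving one agent to a point between its position and the outcome keeps the outcome -/
lemma move_one (hSP : SP f) (x : Fin (n+1) → ℝ) (π : ℝ) (i : Fin (n+1)) (t : ℝ)
    (h1 : min (x i) (f x π) ≤ t) (h2 : t ≤ max (x i) (f x π)) :
    f (Function.update x i t) π = f x π := by
  rcases eq_or_ne (x i) t with h | hne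
  · rw [← h, Function.update_eq_self]
  have A := hSP x π i t
  have B := hSP (Function.update x i t) π i (x i)
  rw [Function.update_self, Function.update_idem, Function.update_eq_self] at B
  set y := f x π with hy
  set y' := f (Function.update x i t) π with hy'
  set a := x i with ha
  rcases le_total a y with hay | hya
  · -- a ≤ y, t ∈ [a, y]
    rw [min_eq_left hay] at h1
    rw [max_eq_right hay] at h2
    have hat : a < t := lt_of_le_of_ne h1 hne
    have eB : |t - y| = y - t := by rw [abs_of_nonpos (by linarith)]; ring
    rw [eB] at B
    obtain ⟨hB1, hB2⟩ := abs_le.mp B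
    have eA : |a - y| = y - a := by rw [abs_of_nonpos (by linarith)]; ring
    rw [eA] at A
    rcases le_or_gt a y' with h' | h'
    · have : |a - y'| = y' - a := by rw [abs_of_nonpos (by linarith)]; ring
      rw [this] at A
      linarith
    · exfalso
      rw [abs_of_pos (by linarith)] at A
      linarith
  · -- y ≤ a, t ∈ [y, a]
    rw [min_eq_right hya] at h1
    rw [max_eq_left hya] at h2
    have hta : t < a := lt_of_le_of_ne h2 (fun h => hne h.symm)
    have eB : |t - y| = t - y := by rw [abs_of_nonneg (by linarith)]
    rw [eB] at B
    obtain ⟨hB1, hB2⟩ := abs_le.mp B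
    have eA : |a - y| = a - y := by rw [abs_of_nonneg (by linarith)]
    rw [eA] at A
    rcases le_or_gt y' a with h' | h'
    · have : |a - y'| = a - y' := by rw [abs_of_nonneg (by linarith)]
      rw [this] at A
      linarith
    · exfalso
      rw [abs_of_neg (by linarith)] at A
      linarith

lemma move_many (hSP : SP f) (x : Fin (n+1) → ℝ) (π : ℝ) (t : ℝ)
    (H : ∀ j, min (x j) (f x π) ≤ t ∧ t ≤ max (x j) (f x π)) (s : Finset (Fin (n+1))) :
    f (fun j => if j ∈ s then t else x j) π = f x π := by
  classical
  induction s using Finset.induction_on with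
  | empty => simp
  | @insert a s ha ih =>
    have hprof : (fun j => if j ∈ insert a s then t else x j)
        = Function.update (fun j => if j ∈ s then t else x j) a t := by
      funext j
      rcases eq_or_ne j a with h | h
      · subst h; simp [ha]
      · simp [Function.update_of_ne h, Finset.mem_insert, h]
    rw [hprof]
    have hxa : (fun j => if j ∈ s then t else x j) a = x a := by simp [ha]
    have h1 := (H a).1
    have h2 := (H a).2
    rw [move_one f hSP _ π a t (by rw [if_neg ha, ih]; exact h1) (by rw [if_neg ha, ih]; exact h2)]
    exact ih

/-- collapse everyone except i0 to the outcome -/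
lemma collapse (hSP : SP f) (x : Fin (n+1) → ℝ) (π : ℝ) (i0 : Fin (n+1)) :
    f (Function.update (fun _ => f x π) i0 (x i0)) π = f x π := by
  classical
  have h := move_many f hSP x π (f x π)
    (fun j => ⟨min_le_right _ _, le_max_right _ _⟩) (Finset.univ.erase i0)
  have hprof : (fun j => if j ∈ Finset.univ.erase i0 then f x π else x j)
      = Function.update (fun _ => f x π) i0 (x i0) := by
    funext j
    rcases eq_or_ne j i0 with hj | hj
    · subst hj; simp
    · simp [Finset.mem_erase, hj, Function.update_of_ne hj]
  rwa [hprof] at h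

def Unan : Prop := ∀ (c : ℝ) (π : ℝ), f (fun _ : Fin (n+1) => c) π = c

lemma unan_of_rob (hRob : ∃ β : ℝ, ∀ (x : Fin (n+1) → ℝ) (π : ℝ), MC x (f x π) ≤ β * rF x) :
    Unan f := by
  obtain ⟨β, hβ⟩ := hRob
  intro c π
  have h := hβ (fun _ => c) π
  have hr : rF (fun _ : Fin (n+1) => c) = 0 := by
    unfold rF; rw [loF_const, hiF_const]; ring
  rw [hr, mul_zero] at h
  have h2 := MC_ge (fun _ : Fin (n+1) => c) (f (fun _ => c) π) 0
  have h3 : |c - f (fun _ : Fin (n+1) => c) π| ≤ 0 := le_trans h2 h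
  have := abs_nonneg (c - f (fun _ : Fin (n+1) => c) π)
  have : |c - f (fun _ : Fin (n+1) => c) π| = 0 := le_antisymm h3 this
  have := abs_eq_zero.mp this
  linarith

lemma range_mem (hSP : SP f) (hU : Unan f) (x : Fin (n+1) → ℝ) (π : ℝ) :
    loF x ≤ f x π ∧ f x π ≤ hiF x := by
  classical
  constructor
  · by_contra h
    push_neg at h
    have hmm : ∀ j, min (x j) (f x π) ≤ loF x ∧ loF x ≤ max (x j) (f x π) := by
      intro j
      constructor
      · exact le_trans (min_le_right _ _) (le_of_lt h)
      · exact le_trans (loF_le x j) (le_max_left _ _)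
    have hm := move_many f hSP x π (loF x) hmm Finset.univ
    simp only [Finset.mem_univ, if_true] at hm
    rw [hU (loF x) π] at hm
    linarith
  · by_contra h
    push_neg at h
    have hmm : ∀ j, min (x j) (f x π) ≤ hiF x ∧ hiF x ≤ max (x j) (f x π) := by
      intro j
      constructor
      · exact le_trans (min_le_left _ _) (le_hiF x j)
      · exact le_trans (le_of_lt h) (le_max_right _ _)
    have hm := move_many f hSP x π (hiF x) hmm Finset.univ
    simp only [Finset.mem_univ, if_true] at hm
    rw [hU (hiF x) π] at hm
    linarith

def Cons (ε : ℝ) : Prop := ∀ x : Fin (n+1) → ℝ, MC x (f x (midF x)) ≤ (2 - ε) * rF x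

lemma unan_RefM (hU : Unan f) : Unan (RefM f) := by
  intro c π
  unfold RefM
  rw [show negP (fun _ : Fin (n+1) => c) = (fun _ : Fin (n+1) => -c) from rfl, hU]
  ring

lemma cons_RefM {ε : ℝ} (hCons : Cons f ε) : Cons (RefM f) ε := by
  intro x
  have h := hCons (negP x)
  rw [rF_negP] at h
  unfold RefM
  rw [show -midF x = midF (negP x) by rw [midF_negP],
    show MC x (-f (negP x) (midF (negP x))) = MC (negP x) (f (negP x) (midF (negP x))) by
      rw [MC_negP]]
  exact h

lemma rob_RefM (hRob : ∃ β : ℝ, ∀ (x : Fin (n+1) → ℝ) (π : ℝ), MC x (f x π) ≤ β * rF x) :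
    ∃ β : ℝ, ∀ (x : Fin (n+1) → ℝ) (π : ℝ), MC x (RefM f x π) ≤ β * rF x := by
  obtain ⟨β, hβ⟩ := hRob
  refine ⟨β, fun x π => ?_⟩
  have h := hβ (negP x) (-π)
  rw [rF_negP] at h
  unfold RefM
  rw [show MC x (-f (negP x) (-π)) = MC (negP x) (f (negP x) (-π)) by rw [MC_negP]]
  exact h

lemma mid_half (hSP : SP f) (hU : Unan f) (hnt : ∀ i : Fin (n+1), ∃ j, j ≠ i)
    {ε : ℝ} (hε0 : 0 < ε) (hCons : Cons f ε) (x : Fin (n+1) → ℝ) :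
    midF x ≤ f x (midF x) := by
  by_contra hlt
  push_neg at hlt
  set π := midF x with hπdef
  set y := f x π with hydef
  obtain ⟨hlo, hhi⟩ := range_mem f hSP hU x π
  obtain ⟨i0, hi0⟩ := exists_eq_hiF x
  obtain ⟨j, hj⟩ := hnt i0
  have hcol := collapse f hSP x π i0
  rw [hi0] at hcol
  set b := loF x + hiF x - y with hbdef
  have hmid : π = (loF x + hiF x) / 2 := rfl
  have hyb : y ≤ b := by simp only [hbdef]; linarith
  have hbhi : b ≤ hiF x := by simp only [hbdef]; linarith
  -- move i0 from hiF x down to b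
  have e1 := move_one f hSP (Function.update (fun _ => y) i0 (hiF x)) π i0 b
    (by rw [Function.update_self, hcol]; exact le_trans (min_le_right _ _) hyb)
    (by rw [Function.update_self, hcol]; exact le_trans hbhi (le_max_left _ _))
  rw [Function.update_idem, hcol] at e1
  set z := Function.update (fun _ : Fin (n+1) => y) i0 b with hzdef
  have hloz : loF z = y := by rw [hzdef, loF_upd i0 j hj, min_eq_left hyb]
  have hhiz : hiF z = b := by rw [hzdef, hiF_upd i0 j hj, max_eq_right hyb]
  have hmidz : midF z = π := by
    unfold midF
    rw [hloz, hhiz, hbdef, hmid]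
    ring
  have hc := hCons z
  rw [hmidz, e1] at hc
  have hMC : b - y ≤ MC z y := by
    have := MC_ge z y i0
    rw [hzdef, Function.update_self, abs_of_nonneg (by linarith)] at this
    exact this
  have hrz : rF z = (b - y) / 2 := by unfold rF; rw [hloz, hhiz]
  rw [hrz] at hc
  have hby : 0 < b - y := by simp only [hbdef]; linarith
  nlinarith [mul_pos hε0 hby]

lemma mid_fix (hSP : SP f) (hU : Unan f) (hnt : ∀ i : Fin (n+1), ∃ j, j ≠ i)
    {ε : ℝ} (hε0 : 0 < ε) (hCons : Cons f ε) (x : Fin (n+1) → ℝ) :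
    f x (midF x) = midF x := by
  refine le_antisymm ?_ (mid_half f hSP hU hnt hε0 hCons x)
  have h := mid_half (RefM f) (SP_RefM f hSP) (unan_RefM f hU) hnt hε0
    (cons_RefM f hCons) (negP x)
  rw [midF_negP, show RefM f (negP x) (-midF x) = - f x (midF x) from RefM_negP f x (midF x)] at h
  linarith

lemma in_half (hSP : SP f) (hU : Unan f) (hnt : ∀ i : Fin (n+1), ∃ j, j ≠ i)
    {ε : ℝ} (hε0 : 0 < ε) (hCons : Cons f ε) (x : Fin (n+1) → ℝ) (π : ℝ)
    (hπhi : π ≤ hiF x) : π ≤ f x π := by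
  by_contra hlt
  push_neg at hlt
  set y := f x π with hydef
  obtain ⟨hlo, hhi⟩ := range_mem f hSP hU x π
  obtain ⟨i0, hi0⟩ := exists_eq_hiF x
  obtain ⟨j, hj⟩ := hnt i0
  have hcol := collapse f hSP x π i0
  rw [hi0] at hcol
  set b := 2 * π - y with hbdef
  set c := min b (hiF x) with hcdef
  have hπb : π ≤ b := by simp only [hbdef]; linarith
  have hπc : π ≤ c := le_min hπb hπhi
  -- from x side: move i0 from hiF x to c, outcome stays y
  have e1 := move_one f hSP (Function.update (fun _ => y) i0 (hiF x)) π i0 c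
    (by rw [Function.update_self, hcol]
        exact le_trans (min_le_right _ _) (by linarith))
    (by rw [Function.update_self, hcol]
        exact le_trans (min_le_right _ _) (le_max_left _ _))
  rw [Function.update_idem, hcol] at e1
  -- from the midpoint profile: outcome is π
  set z := Function.update (fun _ : Fin (n+1) => y) i0 b with hzdef
  have hyb : y ≤ b := by linarith
  have hloz : loF z = y := by rw [hzdef, loF_upd i0 j hj, min_eq_left hyb]
  have hhiz : hiF z = b := by rw [hzdef, hiF_upd i0 j hj, max_eq_right hyb]
  have hmidz : midF z = π := by
    unfold midF
    rw [hloz, hhiz, hbdef]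
    ring
  have hfz : f z π = π := by
    have := mid_fix f hSP hU hnt hε0 hCons z
    rwa [hmidz] at this
  have e2 := move_one f hSP z π i0 c
    (by rw [hzdef, Function.update_self, hfz]
        exact le_trans (min_le_right _ _) hπc)
    (by rw [hzdef, Function.update_self, hfz]
        exact le_trans (min_le_left _ _) (le_max_left _ _))
  rw [hfz] at e2
  rw [hzdef, Function.update_idem] at e2
  rw [e2] at e1
  linarith

lemma in_full (hSP : SP f) (hU : Unan f) (hnt : ∀ i : Fin (n+1), ∃ j, j ≠ i)
    {ε : ℝ} (hε0 : 0 < ε) (hCons : Cons f ε) (x : Fin (n+1) → ℝ) (π : ℝ)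
    (h1 : loF x ≤ π) (h2 : π ≤ hiF x) : f x π = π := by
  refine le_antisymm ?_ (in_half f hSP hU hnt hε0 hCons x π h2)
  have h := in_half (RefM f) (SP_RefM f hSP) (unan_RefM f hU) hnt hε0
    (cons_RefM f hCons) (negP x) (-π) (by rw [hiF_negP]; linarith)
  rw [RefM_negP f x π] at h
  linarith

lemma Kx (hSP : SP f) (hU : Unan f) (hnt : ∀ i : Fin (n+1), ∃ j, j ≠ i)
    {ε : ℝ} (hε0 : 0 < ε) (hCons : Cons f ε) :
    ∀ (k : ℕ) (π w h : ℝ) (i0 : Fin (n+1)), w < h → h < π →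
      f (Function.update (fun _ => w) i0 h) π = w →
      ((2:ℝ)^(k+1) - 1) * (h - w) ≤ π - h := by
  intro k
  induction k with
  | zero =>
    intro π w h i0 hw hh hf
    obtain ⟨j, hj⟩ := hnt i0
    have hfz : f (Function.update (fun _ => w) i0 π) π = π := by
      apply in_full f hSP hU hnt hε0 hCons
      · rw [loF_upd i0 j hj]; exact min_le_right _ _
      · rw [hiF_upd i0 j hj]; exact le_max_right _ _
    have hsp := hSP (Function.update (fun _ => w) i0 h) π i0 π
    rw [Function.update_self, Function.update_idem, hf, hfz] at hsp
    rw [abs_of_pos (by linarith), abs_of_nonpos (by linarith)] at hsp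
    have e : ((2:ℝ)^(0+1) - 1) = 1 := by norm_num
    rw [e, one_mul]
    linarith
  | succ k ih =>
    intro π w h i0 hw hh hf
    obtain ⟨j, hj⟩ := hnt i0
    set M : ℝ := 2^(k+1) - 1 with hM
    have hpk : (1:ℝ) ≤ 2^(k+1) := by
      calc (1:ℝ) = 1^(k+1) := (one_pow _).symm
      _ ≤ 2^(k+1) := by
        apply pow_le_pow_left₀ <;> norm_num
    have hM1 : 0 < M + 1 := by rw [hM]; linarith
    have hMpos : 0 < M := by
      rw [hM]
      have : (2:ℝ) ≤ 2^(k+1) := by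
        calc (2:ℝ) = 2^1 := (pow_one 2).symm
        _ ≤ 2^(k+1) := by
          apply pow_le_pow_right₀ (by norm_num)
          omega
      linarith
    -- sub-claim
    have St : ∀ t, h < t → t < 2*h - w → t < π → M * (t - w) ≤ π - t := by
      intro t ht1 ht2 ht3
      have hwt : w < t := by linarith
      set z := Function.update (fun _ : Fin (n+1) => w) i0 t with hz
      obtain ⟨hlo, hhi⟩ := range_mem f hSP hU z π
      rw [hz, loF_upd i0 j hj, min_eq_left (le_of_lt hwt)] at hlo
      rw [hz, hiF_upd i0 j hj, max_eq_right (le_of_lt hwt)] at hhi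
      have hsp := hSP (Function.update (fun _ => w) i0 h) π i0 t
      rw [Function.update_self, Function.update_idem, hf] at hsp
      rw [abs_of_pos (by linarith)] at hsp
      rcases le_or_gt (f z π) h with hcase | hcase
      · have : |h - f z π| = h - f z π := abs_of_nonneg (by linarith)
        rw [this] at hsp
        have hfzw : f z π = w := le_antisymm (by linarith) hlo
        exact ih π w t i0 hwt ht3 hfzw
      · exfalso
        have : |h - f z π| = f z π - h := by rw [abs_of_neg (by linarith)]; ring
        rw [this] at hsp
        linarith
    -- conclude
    have key : (M + 1) * (2*h - w) ≤ π + M * w := by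
      by_contra hcon
      push_neg at hcon
      set tu := (π + M * w) / (M + 1) with htu
      have htueq : (M + 1) * tu = π + M * w := by
        rw [htu]; field_simp
      have htu2 : tu < 2*h - w := by
        have := htueq ▸ hcon
        exact lt_of_mul_lt_mul_left (by linarith) (le_of_lt hM1)
      have htuπ : tu < π := by
        have hq : (M + 1) * tu < (M + 1) * π := by
          rw [htueq]
          nlinarith
        exact lt_of_mul_lt_mul_left hq (le_of_lt hM1)
      set R := min (2*h - w) π with hR
      have hLR : max h tu < R := by
        apply max_lt
        · exact lt_min (by linarith) hh
        · exact lt_min htu2 htuπ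
      set t := (max h tu + R) / 2 with ht
      have ht1 : h < t := by
        have := le_max_left h tu
        rw [ht]; linarith
      have htut : tu < t := by
        have := le_max_right h tu
        rw [ht]; linarith
      have hR1 : R ≤ 2*h - w := by rw [hR]; exact min_le_left _ _
      have hR2 : R ≤ π := by rw [hR]; exact min_le_right _ _
      have ht2 : t < 2*h - w := by rw [ht]; linarith
      have ht3 : t < π := by rw [ht]; linarith
      have hst := St t ht1 ht2 ht3
      have e1 : M * (t - w) = M*t - M*w := by ring
      have e2 : (M+1) * tu = M*tu + tu := by ring
      have e3 : M*tu < M*t := by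
        exact mul_lt_mul_of_pos_left htut hMpos
      rw [e1] at hst
      rw [e2] at htueq
      linarith
    have epow : ((2:ℝ)^(k+1+1) - 1) = 2*M + 1 := by
      rw [hM, pow_succ]; ring
    rw [epow]
    have e : (2*M+1)*(h-w) + h = (M+1)*(2*h-w) - M*w := by ring
    linarith

lemma above (hSP : SP f) (hU : Unan f) (hnt : ∀ i : Fin (n+1), ∃ j, j ≠ i)
    {ε : ℝ} (hε0 : 0 < ε) (hCons : Cons f ε) (x : Fin (n+1) → ℝ) (π : ℝ)
    (hx : hiF x < π) : f x π = hiF x := by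
  obtain ⟨hlo, hhi⟩ := range_mem f hSP hU x π
  rcases eq_or_lt_of_le hhi with h | h
  · exact h
  exfalso
  set y := f x π with hy
  obtain ⟨i0, hi0⟩ := exists_eq_hiF x
  have hcol := collapse f hSP x π i0
  rw [hi0] at hcol
  have hK := Kx f hSP hU hnt hε0 hCons
  obtain ⟨k, hk⟩ : ∃ k : ℕ, (π - hiF x)/(hiF x - y) < 2^k :=
    pow_unbounded_of_one_lt _ (by norm_num)
  have hd : (0:ℝ) < hiF x - y := by linarith
  have h2 : π - hiF x < 2^k * (hiF x - y) := by
    rwa [div_lt_iff₀ hd] at hk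
  have hKk := hK k π y (hiF x) i0 h hx hcol
  have h3 : (2:ℝ)^k * (hiF x - y) ≤ ((2:ℝ)^(k+1) - 1) * (hiF x - y) := by
    apply mul_le_mul_of_nonneg_right _ (le_of_lt hd)
    have hpk : (1:ℝ) ≤ 2^k := by
      calc (1:ℝ) = 1^k := (one_pow _).symm
      _ ≤ 2^k := by apply pow_le_pow_left₀ <;> norm_num
    rw [pow_succ]
    linarith
  linarith

end SPmech

open SPaux SPaux2 SPmech in
/-- Characterization: MinMaxP is the unique deterministic SP mechanism with prediction
that is (2−ε)-consistent and has bounded robustness. -/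
theorem stmt7 {n : ℕ} (ε : ℝ) (hε0 : 0 < ε) (hε1 : ε ≤ 1)
    (f : (Fin (n+1) → ℝ) → ℝ → ℝ)
    (hSP : ∀ (x : Fin (n+1) → ℝ) (π : ℝ) (i : Fin (n+1)) (xi' : ℝ),
      |x i - f x π| ≤ |x i - f (Function.update x i xi') π|)
    (hCons : ∀ x : Fin (n+1) → ℝ, MC x (f x (midF x)) ≤ (2 - ε) * rF x)
    (hRob : ∃ β : ℝ, ∀ (x : Fin (n+1) → ℝ) (π : ℝ), MC x (f x π) ≤ β * rF x) :
    ∀ (x : Fin (n+1) → ℝ) (π : ℝ), f x π = minMaxP x π := by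
  intro x π
  have hU : Unan f := unan_of_rob f hRob
  cases n with
  | zero =>
    have hx : x = fun _ => x 0 := by
      funext i
      have : i = 0 := Fin.eq_zero i
      rw [this]
    have h1 : f x π = x 0 := by
      have := hU (x 0) π
      rwa [← hx] at this
    have hlo : loF x = x 0 := by
      conv_lhs => rw [hx]
      exact loF_const _
    have hhi : hiF x = x 0 := by
      conv_lhs => rw [hx]
      exact hiF_const _
    rw [h1]
    unfold minMaxP
    rw [hlo, hhi, max_eq_left (min_le_left _ _)]
  | succ m =>
    have hnt : ∀ i : Fin (m+1+1), ∃ j, j ≠ i := fun i => exists_ne i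
    rcases le_or_gt π (hiF x) with hπhi | hπhi
    · rcases le_or_gt (loF x) π with hloπ | hloπ
      · rw [in_full f hSP hU hnt hε0 hCons x π hloπ hπhi]
        unfold minMaxP
        rw [min_eq_right hπhi, max_eq_right hloπ]
      · have h := above (RefM f) (SP_RefM f hSP) (unan_RefM f hU) hnt hε0
          (cons_RefM f hCons) (negP x) (-π) (by rw [hiF_negP]; linarith)
        rw [RefM_negP f x π, hiF_negP] at h
        have hf : f x π = loF x := by linarith
        rw [hf]
        unfold minMaxP
        rw [min_eq_right (le_of_lt (lt_of_lt_of_le hloπ (loF_le_hiF x))),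
          max_eq_left (le_of_lt hloπ)]
    · rw [above f hSP hU hnt hε0 hCons x π hπhi]
      unfold minMaxP
      rw [min_eq_left (le_of_lt hπhi), max_eq_right (loF_le_hiF x)]
end

section
/- When the prediction error bound is η ≥ 1/2, no randomized strategyproof mechanism with prediction on the real line has approximation ratio better than 3/2 for the maximum cost; specifically, for any randomized SP mechanism there exists an instance with error at most 1/2 on which the expected maximum cost is at least 3/2 times the optimum. -/
open Finset

open MeasureTheory

lemma MC2 (x : Fin 2 → ℝ) (y : ℝ) : MC x y = max (|x 0 - y|) (|x 1 - y|) := by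
  have : (univ : Finset (Fin 2)) = {0, 1} := by decide
  simp [MC, this]

lemma loF2 (x : Fin 2 → ℝ) : loF x = min (x 0) (x 1) := by
  have : (univ : Finset (Fin 2)) = {0, 1} := by decide
  simp [loF, this]

lemma hiF2 (x : Fin 2 → ℝ) : hiF x = max (x 0) (x 1) := by
  have : (univ : Finset (Fin 2)) = {0, 1} := by decide
  simp [hiF, this]

/-- For prediction error bound η ≥ 1/2, no randomized strategyproof mechanism with
prediction beats a 3/2-approximation: there is an instance with prediction error at
most 1/2 whose expected maximum cost is at least 3/2 times the optimum. -/
theorem stmt8 (f : (Fin 2 → ℝ) → ℝ → Measure ℝ)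
    (hprob : ∀ x π, IsProbabilityMeasure (f x π))
    (hint : ∀ (x : Fin 2 → ℝ) (π c : ℝ), Integrable (fun y => |c - y|) (f x π))
    (hSP : ∀ (x : Fin 2 → ℝ) (π : ℝ) (i : Fin 2) (xi' : ℝ),
      ∫ y, |x i - y| ∂(f x π) ≤ ∫ y, |x i - y| ∂(f (Function.update x i xi') π)) :
    ∃ (x : Fin 2 → ℝ) (π : ℝ),
      0 < rF x ∧ |π - midF x| ≤ (1/2) * rF x ∧
      (3/2) * rF x ≤ ∫ y, MC x y ∂(f x π) := by
  classical
  set x : Fin 2 → ℝ := ![0, 2] with hx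
  haveI := hprob x 1
  set a : ℝ := ∫ y, |(0:ℝ) - y| ∂(f x 1) with ha
  set b : ℝ := ∫ y, |(2:ℝ) - y| ∂(f x 1) with hb
  have hab : 2 ≤ a + b := by
    have h1 : a + b = ∫ y, (|(0:ℝ) - y| + |(2:ℝ) - y|) ∂(f x 1) :=
      (integral_add (hint x 1 0) (hint x 1 2)).symm
    have h2 : (∫ _ : ℝ, (2:ℝ) ∂(f x 1)) ≤ ∫ y, (|(0:ℝ) - y| + |(2:ℝ) - y|) ∂(f x 1) := by
      apply integral_mono (integrable_const 2) ((hint x 1 0).add (hint x 1 2))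
      intro y
      have := abs_sub_abs_le_abs_sub (0 - y) (2 - y)
      have h := abs_sub (0 - y) (2 - y)
      calc (2:ℝ) = |(0:ℝ) - 2| := by norm_num
        _ = |(0 - y) - (2 - y)| := by ring_nf; norm_num
        _ ≤ |(0:ℝ) - y| + |(2:ℝ) - y| := abs_sub _ _
    simpa [h1] using h2.trans_eq rfl |>.trans_eq rfl
  have hcase : 1 ≤ a ∨ 1 ≤ b := by
    by_contra h
    push_neg at h
    linarith [h.1, h.2]
  rcases hcase with hA | hB
  · -- use x'' = ![-2, 2]
    refine ⟨![-2, 2], 1, ?_, ?_, ?_⟩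
    · norm_num [rF, loF2, hiF2]
    · norm_num [rF, midF, loF2, hiF2]
    · have hup : Function.update x 0 (-2) = ![-2, 2] := by
        funext i; fin_cases i <;> simp [hx, Function.update]
      have hsp := hSP x 1 0 (-2)
      rw [hup] at hsp
      have hx0 : x 0 = 0 := by simp [hx]
      rw [hx0] at hsp
      haveI := hprob ![-2, 2] 1
      have hpt : ∀ y : ℝ, 2 + |(0:ℝ) - y| ≤ MC ![(-2:ℝ), 2] y := by
        intro y
        rw [MC2]
        rcases le_total y 0 with hy | hy
        · have : 2 + |(0:ℝ) - y| ≤ |(2:ℝ) - y| := by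
            rw [abs_of_nonneg (by linarith), abs_of_nonneg (by linarith)]; linarith
          exact le_max_of_le_right (by simpa using this)
        · have : 2 + |(0:ℝ) - y| ≤ |(-2:ℝ) - y| := by
            rw [abs_of_nonpos (by linarith), abs_of_nonpos (by linarith)]; linarith
          exact le_max_of_le_left (by simpa using this)
      have hMCint : Integrable (fun y => MC ![(-2:ℝ), 2] y) (f ![-2, 2] 1) := by
        have := (hint ![-2, 2] 1 (-2)).sup (hint ![-2, 2] 1 2)
        apply this.congr
        filter_upwards with y
        rw [MC2]; simp
      have hmono : (∫ y, (2 + |(0:ℝ) - y|) ∂(f ![-2, 2] 1)) ≤ ∫ y, MC ![(-2:ℝ), 2] y ∂(f ![-2, 2] 1) :=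
        integral_mono ((integrable_const 2).add (hint ![-2, 2] 1 0)) hMCint hpt
      have heq : (∫ y, (2 + |(0:ℝ) - y|) ∂(f ![-2, 2] 1)) = 2 + ∫ y, |(0:ℝ) - y| ∂(f ![-2, 2] 1) := by
        rw [integral_add (integrable_const 2) (hint ![-2, 2] 1 0)]
        simp
      have hr : rF ![(-2:ℝ), 2] = 2 := by norm_num [rF, loF2, hiF2]
      rw [hr]
      have : (3:ℝ) ≤ 2 + ∫ y, |(0:ℝ) - y| ∂(f ![-2, 2] 1) := by linarith [hsp]
      linarith [heq ▸ hmono]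
  · -- use x' = ![0, 4]
    refine ⟨![0, 4], 1, ?_, ?_, ?_⟩
    · norm_num [rF, loF2, hiF2]
    · norm_num [rF, midF, loF2, hiF2]
    · have hup : Function.update x 1 4 = ![0, 4] := by
        funext i; fin_cases i <;> simp [hx, Function.update]
      have hsp := hSP x 1 1 4
      rw [hup] at hsp
      have hx1 : x 1 = 2 := by simp [hx]
      rw [hx1] at hsp
      haveI := hprob ![0, 4] 1
      have hpt : ∀ y : ℝ, 2 + |(2:ℝ) - y| ≤ MC ![(0:ℝ), 4] y := by
        intro y
        rw [MC2]
        rcases le_total y 2 with hy | hy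
        · have : 2 + |(2:ℝ) - y| ≤ |(4:ℝ) - y| := by
            rw [abs_of_nonneg (by linarith), abs_of_nonneg (by linarith)]; linarith
          exact le_max_of_le_right (by simpa using this)
        · have : 2 + |(2:ℝ) - y| ≤ |(0:ℝ) - y| := by
            rw [abs_of_nonpos (by linarith), abs_of_nonpos (by linarith)]; linarith
          exact le_max_of_le_left (by simpa using this)
      have hMCint : Integrable (fun y => MC ![(0:ℝ), 4] y) (f ![0, 4] 1) := by
        have := (hint ![0, 4] 1 0).sup (hint ![0, 4] 1 4)
        apply this.congr
        filter_upwards with y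
        rw [MC2]; simp
      have hmono : (∫ y, (2 + |(2:ℝ) - y|) ∂(f ![0, 4] 1)) ≤ ∫ y, MC ![(0:ℝ), 4] y ∂(f ![0, 4] 1) :=
        integral_mono ((integrable_const 2).add (hint ![0, 4] 1 2)) hMCint hpt
      have heq : (∫ y, (2 + |(2:ℝ) - y|) ∂(f ![0, 4] 1)) = 2 + ∫ y, |(2:ℝ) - y| ∂(f ![0, 4] 1) := by
        rw [integral_add (integrable_const 2) (hint ![0, 4] 1 2)]
        simp
      have hr : rF ![(0:ℝ), 4] = 2 := by norm_num [rF, loF2, hiF2]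
      rw [hr]
      have : (3:ℝ) ≤ 2 + ∫ y, |(2:ℝ) - y| ∂(f ![0, 4] 1) := by linarith [hsp]
      linarith [heq ▸ hmono]
end

section
/- The LRM mechanism on the real line, which outputs min_i x_i with probability 1/4, max_i x_i with probability 1/4, and their midpoint with probability 1/2, achieves expected maximum cost at most (3/2)·(max_i x_i − min_i x_i)/2, i.e., it is a 3/2-approximation for the maximum cost. -/
open Finset

/-- LRM, which outputs the leftmost point w.p. 1/4, the rightmost w.p. 1/4 and the
midpoint w.p. 1/2, is a 3/2-approximation for the maximum cost. -/
theorem stmt10 {n : ℕ} (x : Fin (n+1) → ℝ) :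
    (1/4) * MC x (loF x) + (1/4) * MC x (hiF x) + (1/2) * MC x (midF x)
      ≤ (3/2) * rF x := by
  have hlo : ∀ i, loF x ≤ x i := fun i => inf'_le _ (mem_univ i)
  have hhi : ∀ i, x i ≤ hiF x := fun i => le_sup' _ (mem_univ i)
  have h1 : MC x (loF x) ≤ hiF x - loF x := by
    apply sup'_le; intro i _
    rw [abs_of_nonneg (by linarith [hlo i])]
    linarith [hhi i]
  have h2 : MC x (hiF x) ≤ hiF x - loF x := by
    apply sup'_le; intro i _
    rw [abs_of_nonpos (by linarith [hhi i])]
    linarith [hlo i]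
  have h3 : MC x (midF x) ≤ rF x := by
    apply sup'_le; intro i _
    rw [abs_le]
    unfold midF rF
    constructor <;> [linarith [hlo i]; linarith [hhi i]]
  have hr : hiF x - loF x = 2 * rF x := by unfold rF; ring
  rw [hr] at h1 h2
  linarith
end

section
/- The MinMaxP mechanism on the real line is strongly group strategyproof: for every coalition S of agents and every joint misreport x_S', if some agent in S strictly decreases their cost |x_i − y|, then some agent in S strictly increases their cost. -/
open Finset

/-- MinMaxP is strongly group strategyproof: for any coalition S and joint misreport,
if some member of S strictly decreases their cost, then some member of S strictly
increases their cost. -/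
theorem stmt16 {n : ℕ} (x : Fin (n+1) → ℝ) (π : ℝ) (S : Finset (Fin (n+1)))
    (x' : Fin (n+1) → ℝ) (hagree : ∀ i ∉ S, x' i = x i)
    (hgain : ∃ i ∈ S, |x i - minMaxP x' π| < |x i - minMaxP x π|) :
    ∃ j ∈ S, |x j - minMaxP x π| < |x j - minMaxP x' π| := by
  obtain ⟨i, hiS, hlt⟩ := hgain
  set y := minMaxP x π with hy
  set y' := minMaxP x' π with hy'
  have hylo : loF x ≤ y := le_max_left _ _
  have hymin : min (hiF x) π ≤ y := le_max_right _ _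
  have hxihi : x i ≤ hiF x := Finset.le_sup' x (mem_univ i)
  have hxilo : loF x ≤ x i := Finset.inf'_le x (mem_univ i)
  have hlohi' : loF x' ≤ hiF x' :=
    le_trans (Finset.inf'_le x' (mem_univ i)) (Finset.le_sup' x' (mem_univ i))
  rcases lt_trichotomy y' y with hc | hc | hc
  · -- y' < y : gainer has x i < y; y ≤ π; y' = hiF x'; loser is the max agent
    have hxiy : x i < y := by
      by_contra h
      push_neg at h
      rw [abs_of_nonneg (by linarith), abs_of_nonneg (by linarith)] at hlt
      linarith
    have hymin' : y = min (hiF x) π := by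
      rcases max_choice (loF x) (min (hiF x) π) with h | h
      · rw [hy, minMaxP] at *; linarith
      · exact h
    have hyπ : y ≤ π := hymin' ▸ min_le_right _ _
    have hyhi : y ≤ hiF x := hymin' ▸ min_le_left _ _
    have hy'hi : y' = hiF x' := by
      have hminle : min (hiF x') π ≤ y' := le_max_right _ _
      have hmin : min (hiF x') π = hiF x' := by
        rcases min_choice (hiF x') π with h | h
        · exact h
        · rw [h] at hminle; linarith
      rw [hy', minMaxP, hmin]
      exact max_eq_right hlohi'
    obtain ⟨j, -, hj⟩ := Finset.exists_mem_eq_sup' (univ_nonempty) x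
    have hjhi : x j = hiF x := hj.symm
    have hjy : y ≤ x j := hjhi ▸ hyhi
    have hjS : j ∈ S := by
      by_contra hjS
      have h1 : x' j = x j := hagree j hjS
      have h2 : x' j ≤ hiF x' := Finset.le_sup' x' (mem_univ j)
      rw [h1, hjhi] at h2
      rw [hy'hi] at hc
      linarith
    refine ⟨j, hjS, ?_⟩
    rw [abs_of_nonneg (by linarith), abs_of_nonneg (by linarith)]
    linarith
  · rw [hc] at hlt; exact absurd hlt (lt_irrefl _)
  · -- y < y' : gainer has x i > y; π ≤ y; y' = loF x'; loser is the min agent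
    have hxiy : y < x i := by
      by_contra h
      push_neg at h
      rw [abs_of_nonpos (by linarith), abs_of_nonpos (by linarith)] at hlt
      linarith
    have hπy : π ≤ y := by
      rcases le_total π (hiF x) with h | h
      · rwa [min_eq_right h] at hymin
      · rw [min_eq_left h] at hymin; linarith
    have hy'lo : y' = loF x' := by
      rcases max_choice (loF x') (min (hiF x') π) with h | h
      · exact h
      · have h4 : y' = min (hiF x') π := by rw [hy', minMaxP]; exact h
        rw [h4] at hc
        linarith [min_le_right (hiF x') π]
    obtain ⟨j, -, hj⟩ := Finset.exists_mem_eq_inf' (univ_nonempty) x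
    have hjlo : x j = loF x := hj.symm
    have hjy : x j ≤ y := hjlo ▸ hylo
    have hjS : j ∈ S := by
      by_contra hjS
      have h1 : x' j = x j := hagree j hjS
      have h2 : loF x' ≤ x' j := Finset.inf'_le x' (mem_univ j)
      rw [h1, hjlo] at h2
      rw [hy'lo] at hc
      linarith
    refine ⟨j, hjS, ?_⟩
    rw [abs_of_nonpos (by linarith), abs_of_nonpos (by linarith)]
    linarith
end

section
/- Let f be a randomized strategyproof mechanism on the real line (without prediction) whose expected maximum cost is at most 2 times the optimum on every instance, and suppose f satisfies strong group strategyproofness. Then for any three-agent profile x_1 ≤ x_2 ≤ x_3, the output of f(x) lies with probability 1 either entirely in [x_1, x_2] or entirely in [x_2, x_3]. -/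
open Finset

open MeasureTheory

lemma aux_side (μ : Measure ℝ) [IsProbabilityMeasure μ]
    (hY : Integrable (fun y => y) μ) (c : ℝ)
    (hc : Integrable (fun y => |c - y|) μ)
    (h : ∫ y, |c - y| ∂μ = |c - ∫ y, y ∂μ|) :
    ((∫ y, y ∂μ) ≤ c → ∀ᵐ y ∂μ, y ≤ c) ∧ (c ≤ (∫ y, y ∂μ) → ∀ᵐ y ∂μ, c ≤ y) := by
  set m := ∫ y, y ∂μ with hm
  have hcy : Integrable (fun y => c - y) μ := (integrable_const c).sub hY
  have hyc : Integrable (fun y => y - c) μ := hY.sub (integrable_const c)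
  have hsub : ∫ y, (c - y) ∂μ = c - m := by
    rw [integral_sub (integrable_const c) hY, integral_const]; simp [hm]
  constructor
  · intro hle
    have habs : |c - m| = c - m := abs_of_nonneg (by linarith)
    have h0 : ∫ y, (|c - y| - (c - y)) ∂μ = 0 := by
      rw [integral_sub hc hcy, hsub, h, habs]; ring
    have hnn : (0 : ℝ → ℝ) ≤ fun y => |c - y| - (c - y) := fun y => by
      have := le_abs_self (c - y); simp; linarith
    have hz := (integral_eq_zero_iff_of_nonneg hnn (hc.sub hcy)).mp h0
    filter_upwards [hz] with y hy
    simp only [Pi.zero_apply] at hy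
    have h1 : |c - y| = c - y := by linarith
    have h2 := abs_nonneg (c - y)
    linarith
  · intro hle
    have habs : |c - m| = m - c := by rw [abs_sub_comm]; exact abs_of_nonneg (by linarith)
    have hsub' : ∫ y, (y - c) ∂μ = m - c := by
      rw [integral_sub hY (integrable_const c), integral_const]; simp [hm]
    have h0 : ∫ y, (|c - y| - (y - c)) ∂μ = 0 := by
      rw [integral_sub hc hyc, hsub', h, habs]; ring
    have hnn : (0 : ℝ → ℝ) ≤ fun y => |c - y| - (y - c) := fun y => by
      have := neg_abs_le (c - y); simp; linarith
    have hz := (integral_eq_zero_iff_of_nonneg hnn (hc.sub hyc)).mp h0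
    filter_upwards [hz] with y hy
    simp only [Pi.zero_apply] at hy
    have h1 : |c - y| = y - c := by linarith
    have h2 := abs_nonneg (c - y)
    linarith

/-- Support lemma: any randomized prediction-free strongly group strategyproof
mechanism with approximation ratio at most 2 must, on a sorted three-agent profile,
place the facility with probability 1 in [x₁, x₂] or with probability 1 in [x₂, x₃]. -/
theorem stmt18 (f : (Fin 3 → ℝ) → Measure ℝ)
    (hprob : ∀ x, IsProbabilityMeasure (f x))
    (hint : ∀ (x : Fin 3 → ℝ) (c : ℝ), Integrable (fun y => |c - y|) (f x))
    (happrox : ∀ x : Fin 3 → ℝ, ∫ y, MC x y ∂(f x) ≤ 2 * rF x)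
    (hSGSP : ∀ (x x' : Fin 3 → ℝ) (S : Finset (Fin 3)), (∀ i ∉ S, x' i = x i) →
      (∀ i ∈ S, ∫ y, |x i - y| ∂(f x') ≤ ∫ y, |x i - y| ∂(f x)) →
      ∀ i ∈ S, ∫ y, |x i - y| ∂(f x') = ∫ y, |x i - y| ∂(f x)) :
    ∀ x : Fin 3 → ℝ, x 0 ≤ x 1 → x 1 ≤ x 2 →
      f x (Set.Icc (x 0) (x 1)) = 1 ∨ f x (Set.Icc (x 1) (x 2)) = 1 := by
  intro x h01 h12
  haveI := hprob x
  set μ := f x with hμ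
  -- integrability of the identity
  have habs0 : Integrable (fun y => |y|) μ := by
    have := hint x 0
    simpa using this
  have hY : Integrable (fun y => y) μ := by
    have : AEStronglyMeasurable (fun y : ℝ => y) μ := measurable_id.aestronglyMeasurable
    exact (integrable_norm_iff this).mp (by simpa [Real.norm_eq_abs] using habs0)
  set m := ∫ y, y ∂μ with hm
  -- endpoints of the profile
  have hlo : loF x = x 0 := by
    refine le_antisymm (inf'_le _ (mem_univ 0)) (le_inf' _ _ ?_)
    intro i _; fin_cases i <;> simp <;> linarith
  have hhi : hiF x = x 2 := by
    refine le_antisymm (sup'_le _ _ ?_) (le_sup' _ (mem_univ 2))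
    intro i _; fin_cases i <;> simp <;> linarith
  have hrF : 2 * rF x = x 2 - x 0 := by rw [rF, hlo, hhi]; ring
  -- MC integrable
  have hMCle : ∀ y, MC x y ≤ |x 0 - y| ⊔ (|x 1 - y| ⊔ |x 2 - y|) := by
    intro y
    refine sup'_le _ _ ?_
    intro i _
    fin_cases i
    · exact le_sup_left
    · exact le_sup_of_le_right le_sup_left
    · exact le_sup_of_le_right le_sup_right
  have hMCge : ∀ (i : Fin 3) (y : ℝ), |x i - y| ≤ MC x y := fun i y => by
    unfold MC; exact le_sup' (fun j => |x j - y|) (mem_univ i)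
  have hMCeq : (fun y => MC x y) = (fun y => |x 0 - y|) ⊔ ((fun y => |x 1 - y|) ⊔ (fun y => |x 2 - y|)) := by
    funext y
    refine le_antisymm (hMCle y) ?_
    simp only [Pi.sup_apply]
    exact sup_le (hMCge 0 y) (sup_le (hMCge 1 y) (hMCge 2 y))
  have hMCint : Integrable (fun y => MC x y) μ := by
    rw [hMCeq]
    exact (hint x (x 0)).sup ((hint x (x 1)).sup (hint x (x 2)))
  -- mean lies in [x 0, x 2]
  have hm2 : m ≤ x 2 := by
    have hmono : ∫ y, (y - x 0) ∂μ ≤ ∫ y, MC x y ∂μ := by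
      refine integral_mono (hY.sub (integrable_const _)) hMCint ?_
      intro y
      calc y - x 0 ≤ |x 0 - y| := by rw [abs_sub_comm]; exact le_abs_self _
        _ ≤ MC x y := hMCge 0 y
    have hint0 : ∫ y, (y - x 0) ∂μ = m - x 0 := by
      rw [integral_sub hY (integrable_const _), integral_const]; simp [hm]
    have := happrox x
    rw [hμ] at *
    linarith [hmono, hint0, hrF, this]
  have hm0 : x 0 ≤ m := by
    have hmono : ∫ y, (x 2 - y) ∂μ ≤ ∫ y, MC x y ∂μ := by
      refine integral_mono ((integrable_const _).sub hY) hMCint ?_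
      intro y
      calc x 2 - y ≤ |x 2 - y| := le_abs_self _
        _ ≤ MC x y := hMCge 2 y
    have hint0 : ∫ y, (x 2 - y) ∂μ = x 2 - m := by
      rw [integral_sub (integrable_const _) hY, integral_const]; simp [hm]
    have := happrox x
    linarith [hmono, hint0, hrF, this]
  -- the constant misreport
  set x' : Fin 3 → ℝ := fun _ => m with hx'
  haveI := hprob x'
  have hlo' : loF x' = m := by
    exact inf'_const univ_nonempty m
  have hhi' : hiF x' = m := by
    exact sup'_const univ_nonempty m
  have hMC' : ∀ y, MC x' y = |m - y| := by
    intro y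
    exact sup'_const univ_nonempty (|m - y|)
  have hzero : ∫ y, |m - y| ∂(f x') = 0 := by
    have h1 := happrox x'
    have h2 : ∫ y, MC x' y ∂(f x') = ∫ y, |m - y| ∂(f x') := by
      congr 1; funext y; exact hMC' y
    have h3 : (0:ℝ) ≤ ∫ y, |m - y| ∂(f x') := integral_nonneg fun y => abs_nonneg _
    rw [rF, hlo', hhi'] at h1
    rw [h2] at h1
    linarith
  have haem : ∀ᵐ y ∂(f x'), y = m := by
    have hz := (integral_eq_zero_iff_of_nonneg (fun y => abs_nonneg (m - y)) (hint x' m)).mp hzero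
    filter_upwards [hz] with y hy
    simp only [Pi.zero_apply] at hy
    have := abs_eq_zero.mp hy
    linarith
  have hcost' : ∀ i : Fin 3, ∫ y, |x i - y| ∂(f x') = |x i - m| := by
    intro i
    have : ∫ y, |x i - y| ∂(f x') = ∫ _, |x i - m| ∂(f x') := by
      refine integral_congr_ae ?_
      filter_upwards [haem] with y hy
      rw [hy]
    rw [this, integral_const]
    simp
  -- Jensen's inequality gives weak improvement
  have hjensen : ∀ i : Fin 3, |x i - m| ≤ ∫ y, |x i - y| ∂μ := by
    intro i
    have h1 : ∫ y, (x i - y) ∂μ = x i - m := by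
      rw [integral_sub (integrable_const _) hY, integral_const]; simp [hm]
    calc |x i - m| = ‖∫ y, (x i - y) ∂μ‖ := by rw [h1, Real.norm_eq_abs]
      _ ≤ ∫ y, ‖x i - y‖ ∂μ := norm_integral_le_integral_norm _
      _ = ∫ y, |x i - y| ∂μ := by simp [Real.norm_eq_abs]
  have heq := hSGSP x x' univ (fun i hi => absurd (mem_univ i) hi)
    (fun i _ => by rw [hcost' i]; exact hjensen i)
  have hcost : ∀ i : Fin 3, ∫ y, |x i - y| ∂μ = |x i - m| := by
    intro i
    have := heq i (mem_univ i)
    rw [hcost' i] at this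
    exact this.symm
  -- equality forces one-sidedness
  have haux : ∀ i : Fin 3, ((m ≤ x i → ∀ᵐ y ∂μ, y ≤ x i) ∧ (x i ≤ m → ∀ᵐ y ∂μ, x i ≤ y)) := by
    intro i
    exact aux_side μ hY (x i) (hint x (x i)) (by rw [hcost i, hm])
  rcases le_total m (x 1) with hcase | hcase
  · left
    have h1 : ∀ᵐ y ∂μ, y ≤ x 1 := (haux 1).1 hcase
    have h2 : ∀ᵐ y ∂μ, x 0 ≤ y := (haux 0).2 hm0
    have hae : ∀ᵐ y ∂μ, y ∈ Set.Icc (x 0) (x 1) := by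
      filter_upwards [h1, h2] with y hy1 hy2
      exact ⟨hy2, hy1⟩
    rw [← prob_compl_eq_zero_iff measurableSet_Icc]
    rwa [ae_iff] at hae
  · right
    have h1 : ∀ᵐ y ∂μ, x 1 ≤ y := (haux 1).2 hcase
    have h2 : ∀ᵐ y ∂μ, y ≤ x 2 := (haux 2).1 hm2
    have hae : ∀ᵐ y ∂μ, y ∈ Set.Icc (x 1) (x 2) := by
      filter_upwards [h1, h2] with y hy1 hy2
      exact ⟨hy1, hy2⟩
    rw [← prob_compl_eq_zero_iff measurableSet_Icc]
    rwa [ae_iff] at hae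
end

section
/- No randomized prediction-free strongly group strategyproof mechanism on the real line has approximation ratio strictly less than 2 for the maximum cost: for every such mechanism f and every ρ < 2, there exists a profile x on which the expected maximum cost of f(x) exceeds ρ times the optimal maximum cost. -/
open Finset

open MeasureTheory

namespace S19

variable (f : (Fin 3 → ℝ) → Measure ℝ)

noncomputable def D (x : Fin 3 → ℝ) (p : ℝ) : ℝ := ∫ y, |p - y| ∂(f x)
noncomputable def EE (x : Fin 3 → ℝ) : ℝ := ∫ y, y ∂(f x)

section basics
variable (hprob : ∀ x, IsProbabilityMeasure (f x))
variable (hint : ∀ (x : Fin 3 → ℝ) (c : ℝ), Integrable (fun y => |c - y|) (f x))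
variable (x : Fin 3 → ℝ)
include hprob hint

lemma Dnonneg (p : ℝ) : 0 ≤ D f x p :=
  integral_nonneg (fun y => abs_nonneg _)

lemma intId : Integrable (fun y => y) (f x) := by
  refine Integrable.mono' (hint x 0) aestronglyMeasurable_id ?_
  filter_upwards with y
  simp [Real.norm_eq_abs, abs_sub_comm]

lemma intConst (c : ℝ) : ∫ _, c ∂(f x) = c := by
  have := hprob x
  rw [integral_const, probReal_univ, one_smul]

lemma Dlip (p q : ℝ) : D f x p ≤ |p - q| + D f x q := by
  have h1 : Integrable (fun y => |p - q| + |q - y|) (f x) :=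
    (integrable_const _).add (hint x q)
  have h : D f x p ≤ ∫ y, (|p - q| + |q - y|) ∂(f x) := by
    refine integral_mono (hint x p) h1 (fun y => ?_)
    calc |p - y| = |(p - q) + (q - y)| := by ring_nf
    _ ≤ |p - q| + |q - y| := abs_add_le _ _
  rwa [integral_add (integrable_const _) (hint x q), intConst f hprob hint x] at h

lemma Dtri (p q : ℝ) : |p - q| ≤ D f x p + D f x q := by
  have h1 : Integrable (fun y => |p - y| + |q - y|) (f x) := (hint x p).add (hint x q)
  have h2 : (|p - q| : ℝ) = ∫ _, |p - q| ∂(f x) := (intConst f hprob hint x _).symm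
  have key : ∫ _, |p - q| ∂(f x) ≤ ∫ y, (|p - y| + |q - y|) ∂(f x) := by
    refine integral_mono (integrable_const _) h1 (fun y => ?_)
    calc |p - q| = |(p - y) - (q - y)| := by ring_nf
    _ ≤ |p - y| + |q - y| := abs_sub _ _
  rw [h2]
  rwa [integral_add (hint x p) (hint x q)] at key

lemma Djensen (p : ℝ) : |p - EE f x| ≤ D f x p := by
  have h2 : (p - EE f x) = ∫ y, (p - y) ∂(f x) := by
    rw [integral_sub (integrable_const _) (intId f hprob hint x), intConst f hprob hint x]
    rfl
  rw [h2]
  calc |∫ y, (p - y) ∂(f x)| = ‖∫ y, (p - y) ∂(f x)‖ := (Real.norm_eq_abs _).symm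
  _ ≤ ∫ y, ‖p - y‖ ∂(f x) := norm_integral_le_integral_norm _
  _ = D f x p := by simp [D, Real.norm_eq_abs]

end basics

-- SGSP hypothesis shape
def SGSP : Prop := ∀ (x x' : Fin 3 → ℝ) (S : Finset (Fin 3)), (∀ i ∉ S, x' i = x i) →
      (∀ i ∈ S, ∫ y, |x i - y| ∂(f x') ≤ ∫ y, |x i - y| ∂(f x)) →
      ∀ i ∈ S, ∫ y, |x i - y| ∂(f x') = ∫ y, |x i - y| ∂(f x)

lemma SP (hs : SGSP f) (x x' : Fin 3 → ℝ) (i : Fin 3) (h : ∀ j, j ≠ i → x' j = x j) :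
    D f x (x i) ≤ D f x' (x i) := by
  by_contra hlt
  push_neg at hlt
  have := hs x x' {i} (fun j hj => h j (by simpa using hj))
    (fun j hj => by rw [Finset.mem_singleton] at hj; subst hj; exact le_of_lt hlt)
    i (Finset.mem_singleton_self i)
  have h2 : D f x' (x i) = D f x (x i) := this
  exact absurd h2 (ne_of_lt hlt)

lemma fullSGSP (hs : SGSP f) (x x' : Fin 3 → ℝ)
    (h : ∀ i, D f x' (x i) ≤ D f x (x i)) :
    ∀ i, D f x' (x i) = D f x (x i) := by
  intro i
  exact hs x x' univ (fun j hj => absurd (Finset.mem_univ j) hj) (fun j _ => h j) i (mem_univ i)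

-- vector evaluations
@[simp] lemma v0 (a b c : ℝ) : (![a,b,c]) 0 = a := rfl
@[simp] lemma v1 (a b c : ℝ) : (![a,b,c]) 1 = b := rfl
@[simp] lemma v2 (a b c : ℝ) : (![a,b,c]) 2 = c := rfl

lemma sup3 (g : Fin 3 → ℝ) : univ.sup' univ_nonempty g = max (g 0) (max (g 1) (g 2)) := by
  apply le_antisymm
  · apply Finset.sup'_le
    intro i _
    fin_cases i
    · exact le_max_left _ _
    · exact le_trans (le_max_left _ _) (le_max_right _ _)
    · exact le_trans (le_max_right _ _) (le_max_right _ _)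
  · exact max_le (Finset.le_sup' g (mem_univ 0))
      (max_le (Finset.le_sup' g (mem_univ 1)) (Finset.le_sup' g (mem_univ 2)))

lemma inf3 (g : Fin 3 → ℝ) : univ.inf' univ_nonempty g = min (g 0) (min (g 1) (g 2)) := by
  apply le_antisymm
  · exact le_min (Finset.inf'_le g (mem_univ 0))
      (le_min (Finset.inf'_le g (mem_univ 1)) (Finset.inf'_le g (mem_univ 2)))
  · apply Finset.le_inf'
    intro i _
    fin_cases i
    · exact min_le_left _ _
    · exact le_trans (min_le_right _ _) (min_le_left _ _)
    · exact le_trans (min_le_right _ _) (min_le_right _ _)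


section structure_lemmas
variable (hprob : ∀ x, IsProbabilityMeasure (f x))
variable (hint : ∀ (x : Fin 3 → ℝ) (c : ℝ), Integrable (fun y => |c - y|) (f x))
variable (hs : SGSP f)
variable (δ : ℝ) (hδ1 : δ < 1)
variable (happ : ∀ a b c : ℝ, a < b → b < c → D f ![a,b,c] ((a+c)/2) ≤ δ * ((c-a)/2))

include hprob hint hs hδ1 happ

lemma unan (m : ℝ) : D f ![m,m,m] m = 0 := by
  by_contra hc
  have hpos : 0 < D f ![m,m,m] m := lt_of_le_of_ne (Dnonneg f hprob hint _ m) (Ne.symm hc)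
  set cv := D f ![m,m,m] m with hcv
  set η := cv / 2 with hη
  have hηpos : 0 < η := by positivity
  have h1 : D f ![m-η,m,m+η] m ≤ δ * η := by
    have := happ (m-η) m (m+η) (by linarith) (by linarith)
    rw [show (m-η+(m+η))/2 = m by ring, show ((m+η)-(m-η))/2 = η by ring] at this
    exact this
  have h2 : D f ![m-η,m,m+η] m < cv := by
    have : δ * η < 1 * η := mul_lt_mul_of_pos_right hδ1 hηpos
    rw [one_mul] at this
    calc D f ![m-η,m,m+η] m ≤ δ * η := h1
    _ < η := this
    _ < cv := by rw [hη]; linarith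
  have key := fullSGSP f hs ![m,m,m] ![m-η,m,m+η]
    (fun i => by fin_cases i <;> simpa using le_of_lt h2) 0
  simp only [v0] at key
  have : D f ![m-η,m,m+η] m = cv := key
  linarith

lemma unanExact (m p : ℝ) : D f ![m,m,m] p = |p - m| := by
  have h0 := unan f hprob hint hs δ hδ1 happ m
  apply le_antisymm
  · have := Dlip f hprob hint ![m,m,m] p m
    rw [h0] at this; linarith
  · have := Dtri f hprob hint ![m,m,m] p m
    rw [h0] at this; linarith

end structure_lemmas

section tstar_section
variable (hprob : ∀ x, IsProbabilityMeasure (f x))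
variable (hint : ∀ (x : Fin 3 → ℝ) (c : ℝ), Integrable (fun y => |c - y|) (f x))
variable (hs : SGSP f)
variable (δ : ℝ) (hδ1 : δ < 1)
variable (happ : ∀ a b c : ℝ, a < b → b < c → D f ![a,b,c] ((a+c)/2) ≤ δ * ((c-a)/2))

include hprob hint hs hδ1 happ

lemma tstar (a b c : ℝ) (hab : a < b) (hbc : b < c) :
    ∃ t, a ≤ t ∧ t ≤ c ∧ EE f ![a,b,c] = t ∧
      D f ![a,b,c] a = t - a ∧ D f ![a,b,c] b = |b - t| ∧ D f ![a,b,c] c = c - t := by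
  set x : Fin 3 → ℝ := ![a,b,c] with hx
  set c1 := D f x a with hc1
  set c2 := D f x b with hc2
  set c3 := D f x c with hc3
  have h1n : 0 ≤ c1 := Dnonneg f hprob hint x a
  have h2n : 0 ≤ c2 := Dnonneg f hprob hint x b
  have h3n : 0 ≤ c3 := Dnonneg f hprob hint x c
  have tri12 : b - a ≤ c1 + c2 := by
    have := Dtri f hprob hint x a b; rw [abs_of_nonpos (by linarith)] at this; linarith
  have tri23 : c - b ≤ c2 + c3 := by
    have := Dtri f hprob hint x b c; rw [abs_of_nonpos (by linarith)] at this; linarith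
  have tri13 : c - a ≤ c1 + c3 := by
    have := Dtri f hprob hint x a c; rw [abs_of_nonpos (by linarith)] at this; linarith
  -- coalition consequence
  have hcoal : ∀ t, |a - t| ≤ c1 → |b - t| ≤ c2 → |c - t| ≤ c3 →
      (|a - t| = c1 ∧ |b - t| = c2 ∧ |c - t| = c3) := by
    intro t h1 h2 h3
    have hx' : ∀ i, D f ![t,t,t] (x i) ≤ D f x (x i) := by
      intro i
      fin_cases i <;> simp only [hx, v0, v1, v2] <;>
        rw [unanExact f hprob hint hs δ hδ1 happ] <;> assumption
    have key := fullSGSP f hs x ![t,t,t] hx'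
    have k0 := key 0; have k1 := key 1; have k2 := key 2
    simp only [hx, v0, v1, v2] at k0 k1 k2
    rw [unanExact f hprob hint hs δ hδ1 happ] at k0 k1 k2
    exact ⟨k0, k1, k2⟩
  set tlo := max (max (a - c1) (b - c2)) (c - c3) with htlo
  set thi := min (min (a + c1) (b + c2)) (c + c3) with hthi
  have hlohi : tlo ≤ thi := by
    simp only [htlo, hthi, max_le_iff, le_min_iff]
    refine ⟨⟨⟨⟨?_,?_⟩,?_⟩,⟨⟨?_,?_⟩,?_⟩⟩,⟨⟨?_,?_⟩,?_⟩⟩ <;> linarith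
  have hmem : ∀ t, tlo ≤ t → t ≤ thi → (|a - t| ≤ c1 ∧ |b - t| ≤ c2 ∧ |c - t| ≤ c3) := by
    intro t h1 h2
    simp only [htlo, hthi, max_le_iff, le_min_iff] at h1 h2
    obtain ⟨⟨h1a, h1b⟩, h1c⟩ := h1
    obtain ⟨⟨h2a, h2b⟩, h2c⟩ := h2
    refine ⟨?_, ?_, ?_⟩ <;> rw [abs_sub_le_iff] <;> constructor <;> linarith
  -- singleton
  have hsing : tlo = thi := by
    by_contra hne
    have hlt : tlo < thi := lt_of_le_of_ne hlohi hne
    obtain ⟨e1lo, e2lo, _⟩ := hcoal tlo (hmem tlo le_rfl hlohi).1 (hmem tlo le_rfl hlohi).2.1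
      (hmem tlo le_rfl hlohi).2.2
    obtain ⟨e1hi, e2hi, _⟩ := hcoal thi (hmem thi hlohi le_rfl).1 (hmem thi hlohi le_rfl).2.1
      (hmem thi hlohi le_rfl).2.2
    have ha : tlo + thi = 2*a := by
      rcases abs_eq_abs.mp (e1lo.trans e1hi.symm) with h | h <;> [linarith; linarith]
    have hb : tlo + thi = 2*b := by
      rcases abs_eq_abs.mp (e2lo.trans e2hi.symm) with h | h <;> [linarith; linarith]
    linarith
  set t := tlo with ht
  obtain ⟨e1, e2, e3⟩ := hcoal t (hmem t le_rfl (le_of_eq hsing)).1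
    (hmem t le_rfl (le_of_eq hsing)).2.1 (hmem t le_rfl (le_of_eq hsing)).2.2
  -- window: E in [mid - δr, mid + δr]
  have hEwin : |(a+c)/2 - EE f x| ≤ δ * ((c-a)/2) :=
    le_trans (Djensen f hprob hint x ((a+c)/2)) (happ a b c hab hbc)
  have hEwin1 : EE f x ≥ (a+c)/2 - δ * ((c-a)/2) := by
    rcases abs_le.mp hEwin with ⟨h1, h2⟩; linarith
  have hEwin2 : EE f x ≤ (a+c)/2 + δ * ((c-a)/2) := by
    rcases abs_le.mp hEwin with ⟨h1, h2⟩; linarith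
  -- t ≥ a
  have hta : a ≤ t := by
    by_contra hlt
    push_neg at hlt
    -- c1 = a - t, c3 = c - t, so c3 - c1 = c - a : all mass below a
    have hc1v : c1 = a - t := by rw [← e1, abs_of_nonneg (by linarith)]
    have hc3v : c3 = c - t := by rw [← e3, abs_of_nonneg (by linarith)]
    set g : ℝ → ℝ := fun y => (c - a) - |c - y| + |a - y| with hg
    have hg0 : ∀ y, 0 ≤ g y := by
      intro y
      have : |c - y| ≤ |c - a| + |a - y| := by
        calc |c - y| = |(c - a) + (a - y)| := by ring_nf
        _ ≤ |c - a| + |a - y| := abs_add_le _ _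
      rw [abs_of_nonneg (by linarith : (0:ℝ) ≤ c - a)] at this
      simp only [hg]; linarith
    have hgint : Integrable g (f x) := by
      apply Integrable.add
      · exact (integrable_const _).sub (hint x c)
      · exact hint x a
    have hgzero : ∫ y, g y ∂(f x) = 0 := by
      have hintc : Integrable (fun y => c - a - |c - y|) (f x) := (integrable_const _).sub (hint x c)
      have e0 : ∫ y, g y ∂(f x) = (∫ y, (c - a - |c - y|) ∂(f x)) + (∫ y, |a - y| ∂(f x)) := by
        simp only [hg]; exact integral_add hintc (hint x a)
      have e1' : ∫ y, (c - a - |c - y|) ∂(f x) = (c - a) - c3 := by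
        rw [integral_sub (integrable_const _) (hint x c), intConst f hprob hint x]; rfl
      have e2' : (∫ y, |a - y| ∂(f x)) = c1 := rfl
      rw [e0, e1', e2', hc1v, hc3v]; ring
    have hae : ∀ᵐ y ∂(f x), g y = 0 :=
      (integral_eq_zero_iff_of_nonneg hg0 hgint).mp hgzero
    have haele : ∀ᵐ y ∂(f x), y ≤ a := by
      filter_upwards [hae] with y hy
      by_contra hya
      push_neg at hya
      simp only [hg] at hy
      rcases le_or_gt y c with h | h
      · rw [abs_of_nonneg (by linarith : (0:ℝ) ≤ c - y),
          abs_of_nonpos (by linarith : a - y ≤ (0:ℝ))] at hy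
        linarith
      · rw [abs_of_nonpos (by linarith : c - y ≤ (0:ℝ)),
          abs_of_nonpos (by linarith : a - y ≤ (0:ℝ))] at hy
        linarith
    have hEa : EE f x ≤ a := by
      have := integral_mono_ae (intId f hprob hint x) (integrable_const a) haele
      rwa [intConst f hprob hint x] at this
    nlinarith [hEwin1]
  -- t ≤ c
  have htc : t ≤ c := by
    by_contra hlt
    push_neg at hlt
    have hc1v : c1 = t - a := by rw [← e1, abs_of_nonpos (by linarith : a - t ≤ 0)]; ring
    have hc3v : c3 = t - c := by rw [← e3, abs_of_nonpos (by linarith : c - t ≤ 0)]; ring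
    set g : ℝ → ℝ := fun y => (c - a) - |a - y| + |c - y| with hg
    have hg0 : ∀ y, 0 ≤ g y := by
      intro y
      have : |a - y| ≤ |a - c| + |c - y| := by
        calc |a - y| = |(a - c) + (c - y)| := by ring_nf
        _ ≤ |a - c| + |c - y| := abs_add_le _ _
      rw [abs_of_nonpos (by linarith : a - c ≤ (0:ℝ))] at this
      simp only [hg]; linarith
    have hgint : Integrable g (f x) := by
      apply Integrable.add
      · exact (integrable_const _).sub (hint x a)
      · exact hint x c
    have hgzero : ∫ y, g y ∂(f x) = 0 := by
      have hintc : Integrable (fun y => c - a - |a - y|) (f x) := (integrable_const _).sub (hint x a)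
      have e0 : ∫ y, g y ∂(f x) = (∫ y, (c - a - |a - y|) ∂(f x)) + (∫ y, |c - y| ∂(f x)) := by
        simp only [hg]; exact integral_add hintc (hint x c)
      have e1' : ∫ y, (c - a - |a - y|) ∂(f x) = (c - a) - c1 := by
        rw [integral_sub (integrable_const _) (hint x a), intConst f hprob hint x]; rfl
      have e2' : (∫ y, |c - y| ∂(f x)) = c3 := rfl
      rw [e0, e1', e2', hc1v, hc3v]; ring
    have hae : ∀ᵐ y ∂(f x), g y = 0 :=
      (integral_eq_zero_iff_of_nonneg hg0 hgint).mp hgzero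
    have haele : ∀ᵐ y ∂(f x), c ≤ y := by
      filter_upwards [hae] with y hy
      by_contra hya
      push_neg at hya
      simp only [hg] at hy
      rcases le_or_gt y a with h | h
      · rw [abs_of_nonneg (by linarith : (0:ℝ) ≤ a - y),
          abs_of_nonneg (by linarith : (0:ℝ) ≤ c - y)] at hy
        linarith
      · rw [abs_of_nonpos (by linarith : a - y ≤ (0:ℝ)),
          abs_of_nonneg (by linarith : (0:ℝ) ≤ c - y)] at hy
        linarith
    have hEc : c ≤ EE f x := by
      have := integral_mono_ae (integrable_const c) (intId f hprob hint x) haele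
      rwa [intConst f hprob hint x] at this
    nlinarith [hEwin2]
  -- E = t
  have hE : EE f x = t := by
    have hja := Djensen f hprob hint x a
    have hjc := Djensen f hprob hint x c
    rw [← hc1] at hja
    rw [← hc3] at hjc
    have e1' : c1 = t - a := by rw [← e1, abs_of_nonpos (by linarith : a - t ≤ 0)]; ring
    have e3' : c3 = c - t := by rw [← e3, abs_of_nonneg (by linarith : (0:ℝ) ≤ c - t)]
    rw [e1'] at hja
    rw [e3'] at hjc
    rcases abs_le.mp hja with ⟨h1, h2⟩
    rcases abs_le.mp hjc with ⟨h3, h4⟩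
    linarith
  refine ⟨t, hta, htc, hE, ?_, ?_, ?_⟩
  · rw [← e1, abs_of_nonpos (by linarith : a - t ≤ 0)]; ring
  · rw [← e2, abs_sub_comm]
  · rw [← e3, abs_of_nonneg (by linarith : (0:ℝ) ≤ c - t)]

end tstar_section

section exactness
variable (hprob : ∀ x, IsProbabilityMeasure (f x))
variable (hint : ∀ (x : Fin 3 → ℝ) (c : ℝ), Integrable (fun y => |c - y|) (f x))

include hprob hint

-- if the "virtual point" t is ≥ b, costs left of b are exactly linear
lemma exact_left (a b c t : ℝ)
    (hE : EE f ![a,b,c] = t) (hDb : D f ![a,b,c] b = |b - t|) (htb : b ≤ t)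
    (p : ℝ) (hp : p ≤ b) : D f ![a,b,c] p = t - p := by
  apply le_antisymm
  · have h1 := Dlip f hprob hint ![a,b,c] p b
    rw [hDb, abs_of_nonpos (by linarith : b - t ≤ 0), abs_of_nonpos (by linarith : p - b ≤ 0)] at h1
    linarith
  · have h2 := Djensen f hprob hint ![a,b,c] p
    rw [hE, abs_of_nonpos (by linarith : p - t ≤ 0)] at h2
    linarith

lemma exact_right (a b c t : ℝ)
    (hE : EE f ![a,b,c] = t) (hDb : D f ![a,b,c] b = |b - t|) (htb : t ≤ b)
    (p : ℝ) (hp : b ≤ p) : D f ![a,b,c] p = p - t := by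
  apply le_antisymm
  · have h1 := Dlip f hprob hint ![a,b,c] p b
    rw [hDb, abs_of_nonneg (by linarith : (0:ℝ) ≤ b - t),
      abs_of_nonneg (by linarith : (0:ℝ) ≤ p - b)] at h1
    linarith
  · have h2 := Djensen f hprob hint ![a,b,c] p
    rw [hE, abs_of_nonneg (by linarith : (0:ℝ) ≤ p - t)] at h2
    linarith

-- support bound when t ≤ b : all mass in [a,b]
lemma suppL (a b c t : ℝ) (hat : a ≤ t) (htb : t ≤ b)
    (hDa : D f ![a,b,c] a = t - a) (hDb : D f ![a,b,c] b = |b - t|)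
    (p : ℝ) : D f ![a,b,c] p ≤ max |p - a| |p - b| := by
  set x : Fin 3 → ℝ := ![a,b,c] with hx
  set g : ℝ → ℝ := fun y => |a - y| + |b - y| - (b - a) with hg
  have hg0 : ∀ y, 0 ≤ g y := by
    intro y
    have : |a - b| ≤ |a - y| + |b - y| := by
      calc |a - b| = |(a - y) - (b - y)| := by ring_nf
      _ ≤ |a - y| + |b - y| := abs_sub _ _
    rw [abs_of_nonpos (by linarith : a - b ≤ 0)] at this
    simp only [hg]; linarith
  have hgint : Integrable g (f x) := ((hint x a).add (hint x b)).sub (integrable_const _)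
  have hgzero : ∫ y, g y ∂(f x) = 0 := by
    have hintsum : Integrable (fun y => |a - y| + |b - y|) (f x) := (hint x a).add (hint x b)
    have e0 : ∫ y, g y ∂(f x) = (∫ y, (|a - y| + |b - y|) ∂(f x)) - (b - a) := by
      simp only [hg]
      have := integral_sub hintsum (integrable_const (b - a)) (μ := f x)
      rw [intConst f hprob hint x] at this
      exact this
    rw [e0, integral_add (hint x a) (hint x b)]
    have e1 : (∫ y, |a - y| ∂(f x)) = t - a := hDa
    have e2 : (∫ y, |b - y| ∂(f x)) = b - t := by
      rw [show (∫ y, |b - y| ∂(f x)) = D f x b from rfl, hDb,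
        abs_of_nonneg (by linarith : (0:ℝ) ≤ b - t)]
    rw [e1, e2]; ring
  have hae : ∀ᵐ y ∂(f x), g y = 0 := (integral_eq_zero_iff_of_nonneg hg0 hgint).mp hgzero
  have haemem : ∀ᵐ y ∂(f x), |p - y| ≤ max |p - a| |p - b| := by
    filter_upwards [hae] with y hy
    simp only [hg] at hy
    have hya : a ≤ y := by
      by_contra hc; push_neg at hc
      rw [abs_of_nonneg (by linarith : (0:ℝ) ≤ a - y),
        abs_of_nonneg (by linarith : (0:ℝ) ≤ b - y)] at hy
      linarith
    have hyb : y ≤ b := by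
      by_contra hc; push_neg at hc
      rw [abs_of_nonpos (by linarith : a - y ≤ 0),
        abs_of_nonpos (by linarith : b - y ≤ 0)] at hy
      linarith
    rcases le_total p y with h | h
    · refine le_trans ?_ (le_max_right _ _)
      rw [abs_of_nonpos (by linarith : p - y ≤ 0), abs_of_nonpos (by linarith : p - b ≤ 0)]
      linarith
    · refine le_trans ?_ (le_max_left _ _)
      rw [abs_of_nonneg (by linarith : (0:ℝ) ≤ p - y), abs_of_nonneg (by linarith : (0:ℝ) ≤ p - a)]
      linarith
  have := integral_mono_ae (hint x p) (integrable_const _) haemem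
  rwa [intConst f hprob hint x] at this

lemma suppR (a b c t : ℝ) (htb : b ≤ t) (htc : t ≤ c)
    (hDb : D f ![a,b,c] b = |b - t|) (hDc : D f ![a,b,c] c = c - t)
    (p : ℝ) : D f ![a,b,c] p ≤ max |p - b| |p - c| := by
  set x : Fin 3 → ℝ := ![a,b,c] with hx
  set g : ℝ → ℝ := fun y => |b - y| + |c - y| - (c - b) with hg
  have hg0 : ∀ y, 0 ≤ g y := by
    intro y
    have : |b - c| ≤ |b - y| + |c - y| := by
      calc |b - c| = |(b - y) - (c - y)| := by ring_nf
      _ ≤ |b - y| + |c - y| := abs_sub _ _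
    rw [abs_of_nonpos (by linarith : b - c ≤ 0)] at this
    simp only [hg]; linarith
  have hgint : Integrable g (f x) := ((hint x b).add (hint x c)).sub (integrable_const _)
  have hgzero : ∫ y, g y ∂(f x) = 0 := by
    have hintsum : Integrable (fun y => |b - y| + |c - y|) (f x) := (hint x b).add (hint x c)
    have e0 : ∫ y, g y ∂(f x) = (∫ y, (|b - y| + |c - y|) ∂(f x)) - (c - b) := by
      simp only [hg]
      have := integral_sub hintsum (integrable_const (c - b)) (μ := f x)
      rw [intConst f hprob hint x] at this
      exact this
    rw [e0, integral_add (hint x b) (hint x c)]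
    have e1 : (∫ y, |b - y| ∂(f x)) = t - b := by
      rw [show (∫ y, |b - y| ∂(f x)) = D f x b from rfl, hDb,
        abs_of_nonpos (by linarith : b - t ≤ 0)]; ring
    have e2 : (∫ y, |c - y| ∂(f x)) = c - t := hDc
    rw [e1, e2]; ring
  have hae : ∀ᵐ y ∂(f x), g y = 0 := (integral_eq_zero_iff_of_nonneg hg0 hgint).mp hgzero
  have haemem : ∀ᵐ y ∂(f x), |p - y| ≤ max |p - b| |p - c| := by
    filter_upwards [hae] with y hy
    simp only [hg] at hy
    have hya : b ≤ y := by
      by_contra hc; push_neg at hc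
      rw [abs_of_nonneg (by linarith : (0:ℝ) ≤ b - y),
        abs_of_nonneg (by linarith : (0:ℝ) ≤ c - y)] at hy
      linarith
    have hyb : y ≤ c := by
      by_contra hcc; push_neg at hcc
      rw [abs_of_nonpos (by linarith : b - y ≤ 0),
        abs_of_nonpos (by linarith : c - y ≤ 0)] at hy
      linarith
    rcases le_total p y with h | h
    · refine le_trans ?_ (le_max_right _ _)
      rw [abs_of_nonpos (by linarith : p - y ≤ 0), abs_of_nonpos (by linarith : p - c ≤ 0)]
      linarith
    · refine le_trans ?_ (le_max_left _ _)
      rw [abs_of_nonneg (by linarith : (0:ℝ) ≤ p - y), abs_of_nonneg (by linarith : (0:ℝ) ≤ p - b)]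
      linarith
  have := integral_mono_ae (hint x p) (integrable_const _) haemem
  rwa [intConst f hprob hint x] at this

end exactness

lemma diff0 (a a' b c : ℝ) : ∀ j, j ≠ (0:Fin 3) → (![a',b,c]) j = (![a,b,c]) j := by
  intro j hj
  fin_cases j
  · simp at hj
  · rfl
  · rfl

lemma diff2 (a b c c' : ℝ) : ∀ j, j ≠ (2:Fin 3) → (![a,b,c']) j = (![a,b,c]) j := by
  intro j hj
  fin_cases j
  · rfl
  · rfl
  · simp at hj

section phases
variable (hprob : ∀ x, IsProbabilityMeasure (f x))
variable (hint : ∀ (x : Fin 3 → ℝ) (c : ℝ), Integrable (fun y => |c - y|) (f x))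
variable (hs : SGSP f)
variable (δ : ℝ) (hδ1 : δ < 1)
variable (happ : ∀ a b c : ℝ, a < b → b < c → D f ![a,b,c] ((a+c)/2) ≤ δ * ((c-a)/2))

include hprob hint hs hδ1 happ

lemma phase2L (a0 b C : ℝ) (ha : a0 < b) (hbC : b < C) (hm : b < EE f ![a0,b,C]) : False := by
  set m := EE f ![a0,b,C] with hmdef
  set ε := (m - b)/2 with hε
  have hεpos : 0 < ε := by rw [hε]; linarith
  set A : ℕ → ℝ := fun j => a0 - (j:ℝ) * ε with hA
  have hAlt : ∀ j : ℕ, A j < b := by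
    intro j
    have : (0:ℝ) ≤ (j:ℝ) * ε := by positivity
    simp only [hA]; linarith
  have hAleb : ∀ j : ℕ, A j ≤ a0 := by
    intro j
    have : (0:ℝ) ≤ (j:ℝ) * ε := by positivity
    simp only [hA]; linarith
  have hstep : ∀ j : ℕ, A (j+1) = A j - ε := by
    intro j; simp only [hA]; push_cast; ring
  clear_value A ε m
  -- the mean stays equal to m forever
  have hInd : ∀ j : ℕ, EE f ![A j, b, C] = m := by
    intro j
    induction j with
    | zero =>
      have : A 0 = a0 := by simp [hA]
      rw [this]
      exact hmdef.symm
    | succ j ih =>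
      obtain ⟨tj, htja, htjc, htjE, htjDa, htjDb, htjDc⟩ :=
        tstar f hprob hint hs δ hδ1 happ (A j) b C (hAlt j) hbC
      rw [ih] at htjE
      subst htjE
      obtain ⟨t', ht'a, ht'c, ht'E, ht'Da, ht'Db, ht'Dc⟩ :=
        tstar f hprob hint hs δ hδ1 happ (A (j+1)) b C (hAlt (j+1)) hbC
      -- exact costs to the left of b at profile j
      have hexj : ∀ p, p ≤ b → D f ![A j, b, C] p = m - p :=
        fun p hp => exact_left f hprob hint (A j) b C m ih htjDb (le_of_lt hm) p hp
      -- SP for agent 0 at true profile (j+1), misreport A j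
      have hSP1 : D f ![A (j+1), b, C] (A (j+1)) ≤ D f ![A j, b, C] (A (j+1)) := by
        have := SP f hs ![A (j+1), b, C] ![A j, b, C] 0 (diff0 (A (j+1)) (A j) b C)
        simpa using this
      have ht'lem : t' ≤ m := by
        rw [ht'Da] at hSP1
        rw [hexj (A (j+1)) (le_of_lt (hAlt (j+1)))] at hSP1
        linarith
      -- SP for agent 0 at true profile j, misreport A (j+1)
      have hSP2 : D f ![A j, b, C] (A j) ≤ D f ![A (j+1), b, C] (A j) := by
        have := SP f hs ![A j, b, C] ![A (j+1), b, C] 0 (diff0 (A j) (A (j+1)) b C)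
        simpa using this
      rw [hexj (A j) (le_of_lt (hAlt j))] at hSP2
      rcases le_or_gt b t' with hcase | hcase
      · -- exactness at profile j+1 gives t' ≥ m
        have := exact_left f hprob hint (A (j+1)) b C t' ht'E ht'Db hcase (A j)
          (le_of_lt (hAlt j))
        rw [this] at hSP2
        have : t' = m := le_antisymm ht'lem (by linarith)
        rw [ht'E, this]
      · -- t' < b : support in [A (j+1), b], contradiction with SP2
        exfalso
        have hsupp := suppL f hprob hint (A (j+1)) b C t' ht'a (le_of_lt hcase)
          ht'Da ht'Db (A j)
        have h1 : |A j - A (j+1)| = ε := by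
          rw [hstep j, abs_of_nonneg (by linarith)]; ring
        have h2 : |A j - b| = b - A j := by
          rw [abs_of_nonpos (by linarith [hAlt j])]; ring
        rw [h1, h2] at hsupp
        have hmax : max ε (b - A j) < m - A j := by
          apply max_lt
          · have := hAlt j; rw [hε]; linarith
          · linarith [hm]
        linarith
  -- kill : the window forces the mean to go to -∞
  obtain ⟨J, hJ⟩ := exists_nat_gt ((δ*(C-a0) + a0 + C - 2*m) / (ε*(1-δ)))
  have hcpos : 0 < ε * (1-δ) := mul_pos hεpos (by linarith)
  have hJ' : δ*(C-a0) + a0 + C - 2*m < (J:ℝ) * (ε*(1-δ)) := by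
    rw [div_lt_iff₀ hcpos] at hJ
    linarith
  have happJ := happ (A J) b C (hAlt J) hbC
  have hjen := Djensen f hprob hint ![A J, b, C] ((A J + C)/2)
  rw [hInd J] at hjen
  have : (A J + C)/2 - m ≥ -(δ * ((C - A J)/2)) := by
    have h1 := le_trans hjen happJ
    rcases abs_le.mp h1 with ⟨hl, hr⟩
    linarith
  simp only [hA] at this
  nlinarith [this, hJ']

lemma phase2R (a0 b C0 : ℝ) (ha : a0 < b) (hbC : b < C0) (hm : EE f ![a0,b,C0] < b) : False := by
  set m := EE f ![a0,b,C0] with hmdef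
  set ε := (b - m)/2 with hε
  have hεpos : 0 < ε := by rw [hε]; linarith
  set A : ℕ → ℝ := fun j => C0 + (j:ℝ) * ε with hA
  have hAlt : ∀ j : ℕ, b < A j := by
    intro j
    have : (0:ℝ) ≤ (j:ℝ) * ε := by positivity
    simp only [hA]; linarith
  have hstep : ∀ j : ℕ, A (j+1) = A j + ε := by
    intro j; simp only [hA]; push_cast; ring
  clear_value A ε m
  have hInd : ∀ j : ℕ, EE f ![a0, b, A j] = m := by
    intro j
    induction j with
    | zero =>
      have : A 0 = C0 := by simp [hA]
      rw [this]
      exact hmdef.symm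
    | succ j ih =>
      obtain ⟨tj, htja, htjc, htjE, htjDa, htjDb, htjDc⟩ :=
        tstar f hprob hint hs δ hδ1 happ a0 b (A j) ha (hAlt j)
      rw [ih] at htjE
      subst htjE
      obtain ⟨t', ht'a, ht'c, ht'E, ht'Da, ht'Db, ht'Dc⟩ :=
        tstar f hprob hint hs δ hδ1 happ a0 b (A (j+1)) ha (hAlt (j+1))
      have hexj : ∀ p, b ≤ p → D f ![a0, b, A j] p = p - m :=
        fun p hp => exact_right f hprob hint a0 b (A j) m ih htjDb (le_of_lt hm) p hp
      have hSP1 : D f ![a0, b, A (j+1)] (A (j+1)) ≤ D f ![a0, b, A j] (A (j+1)) := by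
        have := SP f hs ![a0, b, A (j+1)] ![a0, b, A j] 2 (diff2 a0 b (A (j+1)) (A j))
        simpa using this
      have ht'lem : m ≤ t' := by
        rw [ht'Dc] at hSP1
        rw [hexj (A (j+1)) (le_of_lt (hAlt (j+1)))] at hSP1
        linarith
      have hSP2 : D f ![a0, b, A j] (A j) ≤ D f ![a0, b, A (j+1)] (A j) := by
        have := SP f hs ![a0, b, A j] ![a0, b, A (j+1)] 2 (diff2 a0 b (A j) (A (j+1)))
        simpa using this
      rw [hexj (A j) (le_of_lt (hAlt j))] at hSP2
      rcases le_or_gt t' b with hcase | hcase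
      · have := exact_right f hprob hint a0 b (A (j+1)) t' ht'E ht'Db hcase (A j)
          (le_of_lt (hAlt j))
        rw [this] at hSP2
        have : t' = m := le_antisymm (by linarith) ht'lem
        rw [ht'E, this]
      · exfalso
        have hsupp := suppR f hprob hint a0 b (A (j+1)) t' (le_of_lt hcase) ht'c
          ht'Db ht'Dc (A j)
        have h1 : |A j - A (j+1)| = ε := by
          rw [hstep j, abs_of_nonpos (by linarith)]; ring
        have h2 : |A j - b| = A j - b := by
          rw [abs_of_nonneg (by linarith [hAlt j])]
        rw [h2, h1] at hsupp
        have hmax : max (A j - b) ε < A j - m := by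
          apply max_lt
          · linarith [hm]
          · have := hAlt j; rw [hε]; linarith
        linarith
  obtain ⟨J, hJ⟩ := exists_nat_gt ((δ*(C0-a0) + 2*m - a0 - C0) / (ε*(1-δ)))
  have hcpos : 0 < ε * (1-δ) := mul_pos hεpos (by linarith)
  have hJ' : δ*(C0-a0) + 2*m - a0 - C0 < (J:ℝ) * (ε*(1-δ)) := by
    rw [div_lt_iff₀ hcpos] at hJ
    linarith
  have happJ := happ a0 b (A J) ha (hAlt J)
  have hjen := Djensen f hprob hint ![a0, b, A J] ((a0 + A J)/2)
  rw [hInd J] at hjen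
  have : (a0 + A J)/2 - m ≤ δ * ((A J - a0)/2) := by
    have h1 := le_trans hjen happJ
    rcases abs_le.mp h1 with ⟨hl, hr⟩
    linarith
  simp only [hA] at this
  nlinarith [this, hJ']

end phases

section final
variable (hprob : ∀ x, IsProbabilityMeasure (f x))
variable (hint : ∀ (x : Fin 3 → ℝ) (c : ℝ), Integrable (fun y => |c - y|) (f x))

include hprob hint

lemma exact_all (a b c : ℝ) (hDb : D f ![a,b,c] b = 0) (p : ℝ) :
    D f ![a,b,c] p = |p - b| := by
  apply le_antisymm
  · have := Dlip f hprob hint ![a,b,c] p b; rw [hDb] at this; linarith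
  · have := Dtri f hprob hint ![a,b,c] p b; rw [hDb] at this; linarith

end final

lemma rF3 (a b c : ℝ) (hab : a ≤ b) (hbc : b ≤ c) : rF ![a,b,c] = (c - a)/2 := by
  unfold rF hiF loF
  rw [sup3, inf3]
  simp only [v0, v1, v2]
  rw [max_eq_right hbc, max_eq_right (le_trans hab hbc),
    min_eq_left hbc, min_eq_left hab]

section mcsection
variable (hprob : ∀ x, IsProbabilityMeasure (f x))
variable (hint : ∀ (x : Fin 3 → ℝ) (c : ℝ), Integrable (fun y => |c - y|) (f x))

include hprob hint

lemma MCbound (a b c : ℝ) (hab : a ≤ b) (hbc : b ≤ c) :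
    (c - a)/2 + D f ![a,b,c] ((a+c)/2) ≤ ∫ y, MC ![a,b,c] y ∂(f ![a,b,c]) := by
  have hMCeq : (fun y => MC ![a,b,c] y) = fun y => max |a - y| (max |b - y| |c - y|) := by
    funext y
    unfold MC
    rw [sup3]
    simp only [v0, v1, v2]
  have hMCint : Integrable (fun y => MC ![a,b,c] y) (f ![a,b,c]) := by
    rw [hMCeq]
    exact Integrable.sup (hint _ a) (Integrable.sup (hint _ b) (hint _ c))
  have hlow : ∀ y, (c-a)/2 + |(a+c)/2 - y| ≤ MC ![a,b,c] y := by
    intro y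
    rw [congrFun hMCeq y]
    rcases le_total y ((a+c)/2) with h | h
    · have he : (c-a)/2 + |(a+c)/2 - y| = |c - y| := by
        rw [abs_of_nonneg (by linarith : (0:ℝ) ≤ (a+c)/2 - y),
          abs_of_nonneg (by linarith : (0:ℝ) ≤ c - y)]
        ring
      rw [he]
      exact le_trans (le_max_right _ _) (le_max_right _ _)
    · have he : (c-a)/2 + |(a+c)/2 - y| = |a - y| := by
        rw [abs_of_nonpos (by linarith : (a+c)/2 - y ≤ 0),
          abs_of_nonpos (by linarith : a - y ≤ 0)]
        ring
      rw [he]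
      exact le_max_left _ _
  have hmono := integral_mono ((integrable_const _).add (hint _ ((a+c)/2))) hMCint hlow
  have hadd : ∫ y, ((c-a)/2 + |(a+c)/2 - y|) ∂(f ![a,b,c])
      = (c-a)/2 + D f ![a,b,c] ((a+c)/2) := by
    rw [integral_add (integrable_const _) (hint _ ((a+c)/2)), intConst f hprob hint]
    rfl
  rw [← hadd]
  exact hmono

end mcsection

section phase1sec
variable (hprob : ∀ x, IsProbabilityMeasure (f x))
variable (hint : ∀ (x : Fin 3 → ℝ) (c : ℝ), Integrable (fun y => |c - y|) (f x))
variable (hs : SGSP f)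
variable (δ : ℝ) (hδ1 : δ < 1)
variable (happ : ∀ a b c : ℝ, a < b → b < c → D f ![a,b,c] ((a+c)/2) ≤ δ * ((c-a)/2))

include hprob hint hs hδ1 happ

lemma phase1 (hm : EE f ![0,1,2] = 1) : False := by
  classical
  have hc2 : ∀ k : ℕ, (1:ℝ) < 2 + (k:ℝ) := by
    intro k
    have : (0:ℝ) ≤ (k:ℝ) := Nat.cast_nonneg k
    linarith
  by_cases hex : ∃ k : ℕ, EE f ![0, 1, 2 + (k:ℝ)] ≠ 1
  · have hspec := Nat.find_spec hex
    set k0 := Nat.find hex with hk0def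
    have hk00 : k0 ≠ 0 := by
      intro h
      apply hspec
      rw [h]
      simpa using hm
    obtain ⟨j, hj⟩ := Nat.exists_eq_succ_of_ne_zero hk00
    have hjlt : j < Nat.find hex := by
      rw [← hk0def, hj]; exact Nat.lt_succ_self j
    have hprev : EE f ![0, 1, 2 + (j:ℝ)] = 1 := not_not.mp (Nat.find_min hex hjlt)
    obtain ⟨t, hta, htc, htE, htDa, htDb, htDc⟩ :=
      tstar f hprob hint hs δ hδ1 happ 0 1 (2 + (j:ℝ)) (by norm_num) (hc2 j)
    rw [hprev] at htE
    have hDb0 : D f ![0, 1, 2 + (j:ℝ)] 1 = 0 := by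
      rw [htDb, ← htE]; simp
    have hc2' : (1:ℝ) < 2 + ((j:ℝ) + 1) := by
      have := hc2 j; linarith
    obtain ⟨t', ht'a, ht'c, ht'E, ht'Da, ht'Db, ht'Dc⟩ :=
      tstar f hprob hint hs δ hδ1 happ 0 1 (2 + ((j:ℝ) + 1)) (by norm_num) hc2'
    have hSP : D f ![0, 1, 2 + ((j:ℝ) + 1)] (2 + ((j:ℝ) + 1))
        ≤ D f ![0, 1, 2 + (j:ℝ)] (2 + ((j:ℝ) + 1)) := by
      have := SP f hs ![0, 1, 2 + ((j:ℝ) + 1)] ![0, 1, 2 + (j:ℝ)] 2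
        (diff2 0 1 (2 + ((j:ℝ) + 1)) (2 + (j:ℝ)))
      simpa using this
    rw [exact_all f hprob hint 0 1 (2 + (j:ℝ)) hDb0 (2 + ((j:ℝ) + 1)), ht'Dc] at hSP
    have habs : |2 + ((j:ℝ) + 1) - 1| = 1 + ((j:ℝ) + 1) := by
      rw [abs_of_nonneg (by have := hc2 j; linarith : (0:ℝ) ≤ 2 + ((j:ℝ)+1) - 1)]
      ring
    rw [habs] at hSP
    have ht'1 : 1 ≤ t' := by linarith
    have hne : EE f ![0, 1, 2 + ((j:ℝ) + 1)] ≠ 1 := by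
      have h2 := hspec
      rw [hj] at h2
      push_cast at h2
      exact h2
    have hgt : 1 < EE f ![0, 1, 2 + ((j:ℝ) + 1)] := by
      rw [ht'E]
      rcases lt_or_eq_of_le ht'1 with h | h
      · exact h
      · exact absurd (ht'E.trans h.symm) hne
    exact phase2L f hprob hint hs δ hδ1 happ 0 1 (2 + ((j:ℝ) + 1)) (by norm_num) hc2' hgt
  · push_neg at hex
    obtain ⟨K, hK⟩ := exists_nat_gt (2*δ/(1-δ))
    have happK := happ 0 1 (2 + (K:ℝ)) (by norm_num) (hc2 K)
    have hjen := Djensen f hprob hint ![0, 1, 2 + (K:ℝ)] ((0 + (2 + (K:ℝ)))/2)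
    rw [hex K] at hjen
    have h1 := le_trans hjen happK
    rcases abs_le.mp h1 with ⟨hl, hr⟩
    have hKpos : (0:ℝ) ≤ (K:ℝ) := Nat.cast_nonneg K
    have hd : 2*δ < (K:ℝ)*(1-δ) := by
      rw [div_lt_iff₀ (by linarith)] at hK
      linarith
    nlinarith

end phase1sec

end S19

/-- No randomized prediction-free strongly group strategyproof mechanism on the line
has an approximation ratio strictly less than 2 for the maximum cost. -/
theorem stmt19 (f : (Fin 3 → ℝ) → Measure ℝ)
    (hprob : ∀ x, IsProbabilityMeasure (f x))
    (hint : ∀ (x : Fin 3 → ℝ) (c : ℝ), Integrable (fun y => |c - y|) (f x))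
    (hSGSP : ∀ (x x' : Fin 3 → ℝ) (S : Finset (Fin 3)), (∀ i ∉ S, x' i = x i) →
      (∀ i ∈ S, ∫ y, |x i - y| ∂(f x') ≤ ∫ y, |x i - y| ∂(f x)) →
      ∀ i ∈ S, ∫ y, |x i - y| ∂(f x') = ∫ y, |x i - y| ∂(f x))
    (ρ : ℝ) (hρ : ρ < 2) :
    ∃ x : Fin 3 → ℝ, 0 < rF x ∧ ρ * rF x < ∫ y, MC x y ∂(f x) := by
  have hrF012 : rF ![(0:ℝ),1,2] = 1 := by
    rw [S19.rF3 0 1 2 (by norm_num) (by norm_num)]; norm_num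
  rcases lt_or_ge ρ 1 with hρ1 | hρ1
  · refine ⟨![0,1,2], ?_, ?_⟩
    · rw [hrF012]; norm_num
    · have hb := S19.MCbound f hprob hint 0 1 2 (by norm_num) (by norm_num)
      have hd := S19.Dnonneg f hprob hint ![0,1,2] ((0+2)/2)
      rw [hrF012]
      norm_num at hb
      linarith
  · by_contra hcon
    push_neg at hcon
    set δ := ρ - 1 with hδdef
    have hδ1 : δ < 1 := by rw [hδdef]; linarith
    have happ : ∀ a b c : ℝ, a < b → b < c →
        S19.D f ![a,b,c] ((a+c)/2) ≤ δ * ((c-a)/2) := by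
      intro a b c hab hbc
      have hrpos : 0 < rF ![a,b,c] := by
        rw [S19.rF3 a b c (le_of_lt hab) (le_of_lt hbc)]
        linarith
      have h1 := hcon ![a,b,c] hrpos
      rw [S19.rF3 a b c (le_of_lt hab) (le_of_lt hbc)] at h1
      have h2 := S19.MCbound f hprob hint a b c (le_of_lt hab) hbc.le
      rw [hδdef]
      nlinarith [h1, h2]
    have hSG : S19.SGSP f := hSGSP
    rcases lt_trichotomy (S19.EE f ![0,1,2]) 1 with h | h | h
    · exact S19.phase2R f hprob hint hSG δ hδ1 happ 0 1 2 (by norm_num) (by norm_num) h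
    · exact S19.phase1 f hprob hint hSG δ hδ1 happ h
    · exact S19.phase2L f hprob hint hSG δ hδ1 happ 0 1 2 (by norm_num) (by norm_num) h
end
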